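/- arXiv:2601.17999 — 9 statements merged into one kernel-verified Lean document; each statement's English description precedes it below -/
import Mathlib

section
/- Let n ≥ 1, let A = (a_ij) be a positive n×n reciprocal matrix, and let x = (x_j) be a positive vector in ℝⁿ. Then max_{1≤i,j≤n} a_ij x_j / x_i = max_{1≤i,j≤n} |a_ij − x_i/x_j| / a_ij + 1. -/
/-- For a positive reciprocal matrix `A` and positive vector `x`, the log-Chebyshev
objective equals the maximum relative approximation error plus one. -/
theorem logChebyshev_objective_eq_relative_error_add_one
    (n : ℕ) (hn : 1 ≤ n) (A : Matrix (Fin n) (Fin n) ℝ)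
    (hpos : ∀ i j, 0 < A i j)
    (hrec : ∀ i j, A i j * A j i = 1)
    (x : Fin n → ℝ) (hx : ∀ j, 0 < x j) :
    (⨆ i, ⨆ j, A i j * x j / x i) =
      (⨆ i, ⨆ j, |A i j - x i / x j| / A i j) + 1 := by
  have hne : Nonempty (Fin n) := ⟨⟨0, hn⟩⟩
  set r : Fin n → Fin n → ℝ := fun i j => A i j * x j / x i with hr
  have hB : ∀ (f : Fin n → ℝ), BddAbove (Set.range f) := fun f => (Set.finite_range f).bddAbove
  have hrpos : ∀ i j, 0 < r i j := fun i j => div_pos (mul_pos (hpos i j) (hx j)) (hx i)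
  have hrinv : ∀ i j, r i j * r j i = 1 := by
    intro i j
    have h := hrec i j
    simp only [hr]
    rw [div_mul_div_comm, div_eq_one_iff_eq (mul_pos (hx i) (hx j)).ne']
    linear_combination (x i * x j) * h
  set M := ⨆ i, ⨆ j, r i j with hM
  have hle : ∀ i j, r i j ≤ M := fun i j =>
    le_trans (le_ciSup (hB _) j) (le_ciSup (hB fun i => ⨆ j, r i j) i)
  have hM1 : 1 ≤ M := by
    obtain ⟨i⟩ := hne
    have hii : A i i = 1 := by nlinarith [hrec i i, hpos i i]
    have hrii : r i i = 1 := by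
      simp only [hr, hii, one_mul]
      exact div_self (hx i).ne'
    linarith [hle i i]
  have hM0 : 0 < M := lt_of_lt_of_le one_pos hM1
  have key : ∀ i j, |A i j - x i / x j| / A i j = |1 - r j i| := by
    intro i j
    have hid : A i j - x i / x j = (1 - r j i) * A i j := by
      show A i j - x i / x j = (1 - A j i * x i / x j) * A i j
      field_simp [(hx j).ne']
      linear_combination (x i) * (hrec j i)
    rw [hid, abs_mul, abs_of_pos (hpos i j), mul_div_assoc, div_self (hpos i j).ne', mul_one]
  have hub : ∀ i j, |1 - r j i| ≤ M - 1 := by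
    intro i j
    rw [abs_le]
    constructor
    · linarith [hle j i]
    · have h1 : r j i * r i j = 1 := hrinv j i
      have h2 : r i j ≤ M := hle i j
      have h3 : 0 < r i j := hrpos i j
      have h4 : 1 / M ≤ r j i := by
        rw [div_le_iff₀ hM0]
        nlinarith
      have h5 : 1 - 1 / M ≤ M - 1 := by
        rw [sub_le_sub_iff]
        have : (M - 1) ^ 2 / M ≥ 0 := div_nonneg (sq_nonneg _) hM0.le
        have hexp : M + 1 / M - 2 = (M - 1) ^ 2 / M := by field_simp; ring
        linarith
      linarith
  have hS : (⨆ i, ⨆ j, |A i j - x i / x j| / A i j) = ⨆ i, ⨆ j, |1 - r j i| := by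
    simp only [key]
  rw [hS]
  set S := ⨆ i, ⨆ j, |1 - r j i| with hSdef
  have hSle : ∀ i j, |1 - r j i| ≤ S := by
    intro i j
    calc |1 - r j i| ≤ ⨆ j, |1 - r j i| := le_ciSup (f := fun j => |1 - r j i|) (hB _) j
      _ ≤ S := le_ciSup (f := fun i => ⨆ j, |1 - r j i|) (hB _) i
  have h1 : S ≤ M - 1 := ciSup_le fun i => ciSup_le fun j => hub i j
  have h2 : M ≤ S + 1 := by
    apply ciSup_le; intro i; apply ciSup_le; intro j
    have := hSle j i
    have habs : r i j - 1 ≤ |1 - r i j| := by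
      rw [abs_sub_comm]; exact le_abs_self _
    linarith
  linarith
end

section
/- Let n ≥ 1, let A = (a_ij) be a positive n×n reciprocal matrix, and let x = (x_j) be a positive vector in ℝⁿ. Then x minimizes the function x ↦ Σ_{1≤i,j≤n} (log a_ij − log(x_i/x_j))² over all positive vectors if and only if there exists u > 0 such that x_i = u · (∏_{j=1}^n a_ij)^{1/n} for all i. -/
/-!
With `L = log A`, which is skew-symmetric, and `w = log x`, the objective is the squared distance
from `L` to the consistent matrix `(w i - w j)`. For the row means `m` of `L`, the residual
`L i j - (m i - m j)` is again skew-symmetric and has zero row sums, so it is orthogonal to every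
consistent matrix. Hence the objective at `w` is its value at `m` plus
`∑ i, ∑ j, ((w - m) i - (w - m) j) ^ 2`, and it is minimal exactly when `w - m` is constant.
Finally `exp (m i)` is the geometric mean of row `i`.
-/

open Finset Real

namespace LogEuclidean

variable {ι : Type*} [Fintype ι]

def sqError (L : ι → ι → ℝ) (w : ι → ℝ) : ℝ :=
  ∑ i, ∑ j, (L i j - (w i - w j)) ^ 2

noncomputable def rowMean (L : ι → ι → ℝ) (i : ι) : ℝ :=
  (Fintype.card ι : ℝ)⁻¹ * ∑ j, L i j

theorem sum_sum_mul_sub_of_skew (E : ι → ι → ℝ) (hE : ∀ i j, E j i = -E i j) (d : ι → ℝ) :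
    ∑ i, ∑ j, E i j * (d i - d j) = 2 * ∑ i, (∑ j, E i j) * d i := by
  have hswap : ∑ i, ∑ j, E i j * d j = ∑ i, ∑ j, -(E i j * d i) := by
    rw [sum_comm]
    exact sum_congr rfl fun i _ => sum_congr rfl fun j _ => by rw [hE]; ring
  simp only [mul_sub, sum_sub_distrib, hswap, sum_neg_distrib, sum_mul]
  ring

variable {L : ι → ι → ℝ}

theorem sum_sum_eq_zero_of_skew (hL : ∀ i j, L j i = -L i j) : ∑ i, ∑ j, L i j = 0 := by
  have hswap : ∑ i, ∑ j, L i j = ∑ i, ∑ j, -L i j := by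
    rw [sum_comm]
    exact sum_congr rfl fun i _ => sum_congr rfl fun j _ => hL i j
  simp only [sum_neg_distrib] at hswap
  linarith

theorem sum_rowMean_eq_zero (hL : ∀ i j, L j i = -L i j) : ∑ i, rowMean L i = 0 := by
  simp only [rowMean, ← mul_sum, sum_sum_eq_zero_of_skew hL, mul_zero]

theorem sum_sub_rowMean_eq_zero (hL : ∀ i j, L j i = -L i j) (i : ι) :
    ∑ j, (L i j - (rowMean L i - rowMean L j)) = 0 := by
  have : Nonempty ι := ⟨i⟩
  have hcard : (Fintype.card ι : ℝ) ≠ 0 := Nat.cast_ne_zero.2 Fintype.card_ne_zero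
  simp only [sum_sub_distrib, sum_const, card_univ, nsmul_eq_mul, sum_rowMean_eq_zero hL]
  rw [rowMean, mul_inv_cancel_left₀ hcard]
  ring

theorem sqError_eq_sqError_rowMean_add (hL : ∀ i j, L j i = -L i j) (w : ι → ℝ) :
    sqError L w = sqError L (rowMean L) +
      ∑ i, ∑ j, ((w - rowMean L) i - (w - rowMean L) j) ^ 2 := by
  have hres := sum_sub_rowMean_eq_zero hL
  set m := rowMean L
  have hcross : ∑ i, ∑ j, (L i j - (m i - m j)) * ((w - m) i - (w - m) j) = 0 := by
    rw [sum_sum_mul_sub_of_skew (fun i j => L i j - (m i - m j)) (fun i j => by rw [hL]; ring)]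
    simp only [hres, zero_mul, sum_const_zero, mul_zero]
  have hsq : ∀ i j, (L i j - (w i - w j)) ^ 2 = (L i j - (m i - m j)) ^ 2
      + ((w - m) i - (w - m) j) ^ 2 - 2 * ((L i j - (m i - m j)) * ((w - m) i - (w - m) j)) := by
    intro i j
    simp only [Pi.sub_apply]
    ring
  simp only [sqError, hsq, sum_add_distrib, sum_sub_distrib, ← mul_sum, hcross]
  ring

theorem sum_sum_sq_sub_eq_zero_iff (d : ι → ℝ) :
    ∑ i, ∑ j, (d i - d j) ^ 2 = 0 ↔ ∀ i j, d i = d j := by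
  simp [sum_eq_zero_iff_of_nonneg, sum_nonneg, sq_nonneg, sub_eq_zero]

theorem forall_sqError_le_iff (hL : ∀ i j, L j i = -L i j) (v : ι → ℝ) :
    (∀ w, sqError L v ≤ sqError L w) ↔ ∃ c, ∀ i, v i = rowMean L i + c := by
  set m := rowMean L
  have hpyth := sqError_eq_sqError_rowMean_add hL
  have hnonneg : ∀ w : ι → ℝ, 0 ≤ ∑ i, ∑ j, ((w - m) i - (w - m) j) ^ 2 := fun _ => by positivity
  constructor
  · intro hmin
    have hconst := (sum_sum_sq_sub_eq_zero_iff (v - m)).1 <| by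
      linarith [hmin m, hpyth v, hnonneg v]
    rcases isEmpty_or_nonempty ι with hι | ⟨⟨i₀⟩⟩
    · exact ⟨0, fun i => isEmptyElim i⟩
    · refine ⟨v i₀ - m i₀, fun i => ?_⟩
      have := hconst i i₀
      simp only [Pi.sub_apply] at this
      linarith
  · rintro ⟨c, hc⟩ w
    have hzero := (sum_sum_sq_sub_eq_zero_iff (v - m)).2 fun i j => by simp [hc]
    linarith [hpyth v, hpyth w, hnonneg w]

end LogEuclidean

theorem forall_pos_le_comp_log_iff {ι : Type*} {f : (ι → ℝ) → ℝ} {x : ι → ℝ} :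
    (∀ y : ι → ℝ, (∀ j, 0 < y j) → f (log ∘ x) ≤ f (log ∘ y)) ↔ ∀ w, f (log ∘ x) ≤ f w :=
  ⟨fun h w => by simpa [Function.comp_def] using h (exp ∘ w) fun _ => exp_pos _,
    fun h y _ => h _⟩

theorem exists_log_eq_add_iff {ι : Type*} {x m : ι → ℝ} (hx : ∀ i, 0 < x i) :
    (∃ c, ∀ i, log (x i) = m i + c) ↔ ∃ u, 0 < u ∧ ∀ i, x i = u * exp (m i) := by
  constructor
  · rintro ⟨c, hc⟩
    exact ⟨exp c, exp_pos c, fun i => by rw [← exp_log (hx i), hc i, exp_add, mul_comm]⟩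
  · rintro ⟨u, hu, hu'⟩
    exact ⟨log u, fun i => by rw [hu' i, log_mul hu.ne' (exp_pos _).ne', log_exp, add_comm]⟩

theorem prod_rpow_inv_card_eq_exp {ι : Type*} [Fintype ι] {a : ι → ℝ} (ha : ∀ j, 0 < a j) :
    (∏ j, a j) ^ ((Fintype.card ι : ℝ)⁻¹) = exp ((Fintype.card ι : ℝ)⁻¹ * ∑ j, log (a j)) := by
  rw [rpow_def_of_pos (prod_pos fun j _ => ha j), log_prod fun j _ => (ha j).ne', mul_comm]

open LogEuclidean in
theorem geometric_mean_minimizes_logEuclidean_general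
    (n : ℕ) (A : Matrix (Fin n) (Fin n) ℝ)
    (hpos : ∀ i j, 0 < A i j)
    (hrec : ∀ i j, A i j * A j i = 1)
    (x : Fin n → ℝ) (hx : ∀ j, 0 < x j) :
    (∀ y : Fin n → ℝ, (∀ j, 0 < y j) →
        (∑ i, ∑ j, (Real.log (A i j) - Real.log (x i / x j)) ^ 2) ≤
          ∑ i, ∑ j, (Real.log (A i j) - Real.log (y i / y j)) ^ 2) ↔
      ∃ u : ℝ, 0 < u ∧ ∀ i, x i = u * (∏ j, A i j) ^ ((n : ℝ)⁻¹) := by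
  set L : Fin n → Fin n → ℝ := fun i j => log (A i j)
  have hL : ∀ i j, L j i = -L i j := fun i j => by
    simp only [L, eq_inv_of_mul_eq_one_right (hrec i j), log_inv]
  have hobj : ∀ y : Fin n → ℝ, (∀ j, 0 < y j) →
      ∑ i, ∑ j, (log (A i j) - log (y i / y j)) ^ 2 = sqError L (log ∘ y) := fun y hy => by
    simp only [sqError, L, Function.comp_apply, log_div (hy _).ne' (hy _).ne']
  have hgm : ∀ i, (∏ j, A i j) ^ ((n : ℝ)⁻¹) = exp (rowMean L i) := fun i => by
    simpa [rowMean, L] using prod_rpow_inv_card_eq_exp (hpos i)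
  calc _ ↔ ∀ y : Fin n → ℝ, (∀ j, 0 < y j) → sqError L (log ∘ x) ≤ sqError L (log ∘ y) :=
        forall_congr' fun y => imp_congr_right fun hy => by rw [hobj x hx, hobj y hy]
    _ ↔ ∀ w, sqError L (log ∘ x) ≤ sqError L w := forall_pos_le_comp_log_iff
    _ ↔ ∃ c, ∀ i, log (x i) = rowMean L i + c := forall_sqError_le_iff hL _
    _ ↔ ∃ u, 0 < u ∧ ∀ i, x i = u * exp (rowMean L i) := exists_log_eq_add_iff hx
    _ ↔ _ := by simp only [hgm]

/-- Geometric mean method: a positive vector `x` minimizes the log-Euclidean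
approximation error for a positive reciprocal matrix `A` iff it is a positive
multiple of the vector of geometric means of the rows of `A`. -/
theorem geometric_mean_minimizes_logEuclidean
    (n : ℕ) (hn : 1 ≤ n) (A : Matrix (Fin n) (Fin n) ℝ)
    (hpos : ∀ i j, 0 < A i j)
    (hrec : ∀ i j, A i j * A j i = 1)
    (x : Fin n → ℝ) (hx : ∀ j, 0 < x j) :
    (∀ y : Fin n → ℝ, (∀ j, 0 < y j) →
        (∑ i, ∑ j, (Real.log (A i j) - Real.log (x i / x j)) ^ 2) ≤
          ∑ i, ∑ j, (Real.log (A i j) - Real.log (y i / y j)) ^ 2) ↔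
      ∃ u : ℝ, 0 < u ∧ ∀ i, x i = u * (∏ j, A i j) ^ ((n : ℝ)⁻¹) :=
  geometric_mean_minimizes_logEuclidean_general n A hpos hrec x hx
end

section
/- Let n ≥ 1 and let A = (a_ij) be a positive n×n matrix. Define λ = max over k ∈ {1, …, n} of (tr⊗(A^{⊗k}))^{1/k}, where A^{⊗k} is the k-th max-times power of A and tr⊗ is the max-times trace. Then the infimum over all positive vectors x in ℝⁿ of max_{1≤i,j≤n} a_ij x_j / x_i equals λ, and this infimum is attained by some positive vector x. -/
/-- Max-times matrix product. -/
noncomputable def maxMul {n : ℕ} (A B : Matrix (Fin n) (Fin n) ℝ) :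
    Matrix (Fin n) (Fin n) ℝ :=
  fun i j => ⨆ k, A i k * B k j

/-- Max-times matrix power, with `A^{⊗0} = I` (ones on the diagonal, zeros elsewhere). -/
noncomputable def maxPow {n : ℕ} (A : Matrix (Fin n) (Fin n) ℝ) : ℕ → Matrix (Fin n) (Fin n) ℝ
  | 0 => fun i j => if i = j then 1 else 0
  | k + 1 => maxMul (maxPow A k) A

/-- Max-times trace. -/
noncomputable def tropTr {n : ℕ} (A : Matrix (Fin n) (Fin n) ℝ) : ℝ := ⨆ i, A i i

/-
If `a i j * x j ≤ M * x i` for all `i, j`, then by induction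
`(A^{⊗k}) i j * x j ≤ M ^ k * x i`, so `tr⊗(A^{⊗k}) ≤ M ^ k` and `λ` is a lower bound.
For attainment, rescale to `B = λ⁻¹ • A`, whose cycles of length at most `n` have weight
at most `1`. An optimal path of length `n + 1` repeats a vertex within its first `n + 1`
steps; deleting that cycle shows `B^{⊗(n+1)} ≤ B ⊕ ⋯ ⊕ B^{⊗n} =: B⁺`. Hence any column `x`
of `B⁺` satisfies `B ⊗ x ≤ x`, that is `a i j * x j ≤ λ * x i`.
-/

section MaxTimes

variable {n : ℕ} {B : Matrix (Fin n) (Fin n) ℝ}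

lemma maxPow_zero_apply (i j : Fin n) : maxPow B 0 i j = if i = j then 1 else 0 := rfl

lemma maxPow_succ_apply (m : ℕ) (i j : Fin n) :
    maxPow B (m + 1) i j = ⨆ l, maxPow B m i l * B l j := rfl

lemma maxPow_nonneg (hB : ∀ i j, 0 ≤ B i j) (m : ℕ) (i j : Fin n) : 0 ≤ maxPow B m i j := by
  induction m generalizing j with
  | zero => rw [maxPow_zero_apply]; split_ifs <;> norm_num
  | succ m ih => exact Real.iSup_nonneg fun l => mul_nonneg (ih l) (hB l j)

lemma maxPow_one (hB : ∀ i j, 0 ≤ B i j) : maxPow B 1 = B := by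
  ext i j
  refine le_antisymm (Real.iSup_le (fun l => ?_) (hB i j)) ?_
  · rw [maxPow_zero_apply]
    split_ifs with h
    · rw [h, one_mul]
    · rw [zero_mul]; exact hB i j
  · calc B i j = maxPow B 0 i i * B i j := by rw [maxPow_zero_apply, if_pos rfl, one_mul]
      _ ≤ maxPow B 1 i j := le_ciSup (Finite.bddAbove_range fun l => maxPow B 0 i l * B l j) i

lemma maxPow_mul_maxPow_le (hB : ∀ i j, 0 ≤ B i j) (a b : ℕ) (i l j : Fin n) :
    maxPow B a i l * maxPow B b l j ≤ maxPow B (a + b) i j := by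
  induction b generalizing j with
  | zero =>
    rw [maxPow_zero_apply]
    split_ifs with h
    · rw [h, mul_one, add_zero]
    · rw [mul_zero]; exact maxPow_nonneg hB _ _ _
  | succ b ih =>
    rw [maxPow_succ_apply, Real.mul_iSup_of_nonneg (maxPow_nonneg hB _ _ _), ← add_assoc,
      maxPow_succ_apply]
    refine ciSup_mono (Finite.bddAbove_range _) fun k => ?_
    rw [← mul_assoc]
    exact mul_le_mul_of_nonneg_right (ih k) (hB k j)

lemma maxPow_smul {c : ℝ} (hc : 0 ≤ c) (m : ℕ) (i j : Fin n) :
    maxPow (c • B) m i j = c ^ m * maxPow B m i j := by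
  induction m generalizing j with
  | zero => rw [maxPow_zero_apply, maxPow_zero_apply, pow_zero, one_mul]
  | succ m ih =>
    simp only [maxPow_succ_apply, ih, Matrix.smul_apply, smul_eq_mul,
      Real.mul_iSup_of_nonneg (pow_nonneg hc _)]
    congr 1
    funext l
    ring

end MaxTimes

section Paths

variable {n : ℕ} {B : Matrix (Fin n) (Fin n) ℝ}

/-- A walk is encoded as a sequence `p : ℕ → Fin n`, of which only `p 0, …, p m` matter here. -/
noncomputable def pathWeight (B : Matrix (Fin n) (Fin n) ℝ) (p : ℕ → Fin n) (m : ℕ) : ℝ :=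
  ∏ t ∈ Finset.range m, B (p t) (p (t + 1))

lemma pathWeight_nonneg (hB : ∀ i j, 0 ≤ B i j) (p : ℕ → Fin n) (m : ℕ) :
    0 ≤ pathWeight B p m :=
  Finset.prod_nonneg fun _ _ => hB _ _

lemma pathWeight_succ (p : ℕ → Fin n) (m : ℕ) :
    pathWeight B p (m + 1) = pathWeight B p m * B (p m) (p (m + 1)) :=
  Finset.prod_range_succ _ _

lemma pathWeight_add (p : ℕ → Fin n) (a b : ℕ) :
    pathWeight B p (a + b) = pathWeight B p a * pathWeight B (fun u => p (a + u)) b :=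
  Finset.prod_range_add _ _ _

lemma pathWeight_le_maxPow (hB : ∀ i j, 0 ≤ B i j) (p : ℕ → Fin n) (m : ℕ) :
    pathWeight B p m ≤ maxPow B m (p 0) (p m) := by
  induction m with
  | zero => simp [pathWeight, maxPow_zero_apply]
  | succ m ih =>
    calc pathWeight B p (m + 1)
        = pathWeight B p m * maxPow B 1 (p m) (p (m + 1)) := by
          rw [pathWeight_succ, maxPow_one hB]
      _ ≤ maxPow B m (p 0) (p m) * maxPow B 1 (p m) (p (m + 1)) :=
          mul_le_mul_of_nonneg_right ih (maxPow_nonneg hB _ _ _)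
      _ ≤ maxPow B (m + 1) (p 0) (p (m + 1)) := maxPow_mul_maxPow_le hB _ _ _ _ _

lemma exists_pathWeight_eq_maxPow (hB : ∀ i j, 0 ≤ B i j) (m : ℕ) (i j : Fin n) :
    ∃ p : ℕ → Fin n, p 0 = i ∧ p (m + 1) = j ∧
      pathWeight B p (m + 1) = maxPow B (m + 1) i j := by
  induction m generalizing j with
  | zero =>
    refine ⟨fun t => if t = 0 then i else j, rfl, rfl, ?_⟩
    simp [pathWeight, maxPow_one hB]
  | succ m ih =>
    have : Nonempty (Fin n) := ⟨i⟩
    obtain ⟨l, hl⟩ := exists_eq_ciSup_of_finite (f := fun l => maxPow B (m + 1) i l * B l j)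
    obtain ⟨p, hp0, hpl, hp⟩ := ih l
    refine ⟨Function.update p (m + 1 + 1) j, by simp [hp0], by simp, ?_⟩
    have hprefix :
        pathWeight B (Function.update p (m + 1 + 1) j) (m + 1) = pathWeight B p (m + 1) :=
      Finset.prod_congr rfl fun t ht => by
        rw [Finset.mem_range] at ht
        rw [Function.update_of_ne (by omega), Function.update_of_ne (by omega)]
    rw [pathWeight_succ, hprefix, hp, Function.update_of_ne (by omega), Function.update_self, hpl,
      hl]
    rfl

lemma pathWeight_le_maxPow_of_cycle_le_one (hB : ∀ i j, 0 ≤ B i j) (p : ℕ → Fin n)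
    {s c r : ℕ} (hp : p (s + c) = p s) (hcyc : maxPow B c (p s) (p s) ≤ 1) :
    pathWeight B p (s + c + r) ≤ maxPow B (s + r) (p 0) (p (s + c + r)) := by
  have hhead := pathWeight_le_maxPow hB p s
  have hcycle := pathWeight_le_maxPow hB (fun u => p (s + u)) c
  have htail := pathWeight_le_maxPow hB (fun u => p (s + c + u)) r
  simp only [add_zero, hp] at hcycle htail
  rw [pathWeight_add, pathWeight_add]
  calc pathWeight B p s * pathWeight B (fun u => p (s + u)) c *
        pathWeight B (fun u => p (s + c + u)) r
      ≤ maxPow B s (p 0) (p s) * 1 * maxPow B r (p s) (p (s + c + r)) := by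
        refine mul_le_mul (mul_le_mul hhead (hcycle.trans hcyc) (pathWeight_nonneg hB _ _)
          (maxPow_nonneg hB _ _ _)) htail (pathWeight_nonneg hB _ _) ?_
        exact mul_nonneg (maxPow_nonneg hB _ _ _) zero_le_one
    _ ≤ maxPow B (s + r) (p 0) (p (s + c + r)) := by
        rw [mul_one]; exact maxPow_mul_maxPow_le hB _ _ _ _ _

lemma exists_lt_le_map_eq (p : ℕ → Fin n) : ∃ s t, s < t ∧ t ≤ n ∧ p s = p t := by
  obtain ⟨a, b, hab, h⟩ :=
    Fintype.exists_ne_map_eq_of_card_lt (fun u : Fin (n + 1) => p u) (by simp)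
  rcases Fin.lt_or_lt_of_ne hab with hlt | hlt
  · exact ⟨a, b, hlt, by omega, h⟩
  · exact ⟨b, a, hlt, by omega, h.symm⟩

lemma exists_maxPow_succ_le (hB : ∀ i j, 0 ≤ B i j)
    (hcyc : ∀ (k : Fin n) l, maxPow B (k + 1) l l ≤ 1) (i j : Fin n) :
    ∃ k : Fin n, maxPow B (n + 1) i j ≤ maxPow B (k + 1) i j := by
  obtain ⟨p, rfl, rfl, hp⟩ := exists_pathWeight_eq_maxPow hB n i j
  obtain ⟨s, t, hst, htn, hpst⟩ := exists_lt_le_map_eq p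
  obtain ⟨c, rfl⟩ := Nat.exists_eq_add_of_lt hst
  obtain ⟨r, hr⟩ := Nat.exists_eq_add_of_le htn
  have hlen : n + 1 = s + (c + 1) + (r + 1) := by omega
  refine ⟨⟨s + r, by omega⟩, ?_⟩
  rw [← hp, hlen]
  exact pathWeight_le_maxPow_of_cycle_le_one hB p hpst.symm (hcyc ⟨c, by omega⟩ (p s))

end Paths

section KleenePlus

variable {n : ℕ} {B : Matrix (Fin n) (Fin n) ℝ}

lemma maxPow_le_iSup_maxPow (hB : ∀ i j, 0 ≤ B i j)
    (hcyc : ∀ (k : Fin n) l, maxPow B (k + 1) l l ≤ 1) {m : ℕ} (hm₁ : 1 ≤ m) (hm : m ≤ n + 1)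
    (i j : Fin n) : maxPow B m i j ≤ ⨆ k : Fin n, maxPow B (k + 1) i j := by
  have hbdd := Finite.bddAbove_range fun k : Fin n => maxPow B (k + 1) i j
  rcases hm.lt_or_eq with hm | rfl
  · obtain ⟨k, rfl⟩ := Nat.exists_eq_add_of_le' hm₁
    exact le_ciSup hbdd ⟨k, by omega⟩
  · obtain ⟨k, hk⟩ := exists_maxPow_succ_le hB hcyc i j
    exact hk.trans (le_ciSup hbdd k)

lemma mul_iSup_maxPow_le_iSup_maxPow (hB : ∀ i j, 0 ≤ B i j)
    (hcyc : ∀ (k : Fin n) l, maxPow B (k + 1) l l ≤ 1) (i j l : Fin n) :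
    B i j * ⨆ k : Fin n, maxPow B (k + 1) j l ≤ ⨆ k : Fin n, maxPow B (k + 1) i l := by
  rw [Real.mul_iSup_of_nonneg (hB i j)]
  refine Real.iSup_le (fun k => ?_) (Real.iSup_nonneg fun k => maxPow_nonneg hB _ _ _)
  calc B i j * maxPow B (k + 1) j l = maxPow B 1 i j * maxPow B (k + 1) j l := by
        rw [maxPow_one hB]
    _ ≤ maxPow B (1 + (k + 1)) i l := maxPow_mul_maxPow_le hB _ _ _ _ _
    _ ≤ ⨆ k : Fin n, maxPow B (k + 1) i l :=
        maxPow_le_iSup_maxPow hB hcyc (by omega) (by omega) i l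

end KleenePlus

section LogChebyshev

variable {n : ℕ} {A : Matrix (Fin n) (Fin n) ℝ} {x : Fin n → ℝ} {M : ℝ}

noncomputable def logChebyshev (A : Matrix (Fin n) (Fin n) ℝ) (x : Fin n → ℝ) : ℝ :=
  ⨆ i, ⨆ j, A i j * x j / x i

noncomputable def tropSpectralRadius (A : Matrix (Fin n) (Fin n) ℝ) : ℝ :=
  ⨆ k : Fin n, tropTr (maxPow A (k.1 + 1)) ^ (((k.1 : ℝ) + 1)⁻¹)

lemma tropTr_nonneg {B : Matrix (Fin n) (Fin n) ℝ} (hB : ∀ i, 0 ≤ B i i) : 0 ≤ tropTr B :=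
  Real.iSup_nonneg hB

lemma mul_le_logChebyshev_mul (hx : ∀ j, 0 < x j) (i j : Fin n) :
    A i j * x j ≤ logChebyshev A x * x i := by
  rw [← div_le_iff₀ (hx i)]
  exact (le_ciSup (Finite.bddAbove_range _) j).trans
    (le_ciSup (Finite.bddAbove_range fun i => ⨆ j, A i j * x j / x i) i)

lemma logChebyshev_le (hM : 0 ≤ M) (hx : ∀ j, 0 < x j) (h : ∀ i j, A i j * x j ≤ M * x i) :
    logChebyshev A x ≤ M :=
  Real.iSup_le (fun i => Real.iSup_le (fun j => (div_le_iff₀ (hx i)).2 (h i j)) hM) hM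

lemma logChebyshev_nonneg (hA : ∀ i j, 0 ≤ A i j) (hx : ∀ j, 0 < x j) :
    0 ≤ logChebyshev A x :=
  Real.iSup_nonneg fun i => Real.iSup_nonneg fun j =>
    div_nonneg (mul_nonneg (hA i j) (hx j).le) (hx i).le

lemma maxPow_mul_le_pow_mul (hA : ∀ i j, 0 ≤ A i j) (hM : 0 ≤ M) (hx : ∀ j, 0 ≤ x j)
    (h : ∀ i j, A i j * x j ≤ M * x i) (m : ℕ) (i j : Fin n) :
    maxPow A m i j * x j ≤ M ^ m * x i := by
  induction m generalizing j with
  | zero =>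
    rw [maxPow_zero_apply, pow_zero, one_mul]
    split_ifs with hij
    · rw [hij, one_mul]
    · rw [zero_mul]; exact hx i
  | succ m ih =>
    rw [maxPow_succ_apply, Real.iSup_mul_of_nonneg (hx j)]
    refine Real.iSup_le (fun l => ?_) (mul_nonneg (pow_nonneg hM _) (hx i))
    calc maxPow A m i l * A l j * x j = maxPow A m i l * (A l j * x j) := mul_assoc _ _ _
      _ ≤ maxPow A m i l * (M * x l) := mul_le_mul_of_nonneg_left (h l j) (maxPow_nonneg hA _ _ _)
      _ = M * (maxPow A m i l * x l) := by ring
      _ ≤ M * (M ^ m * x i) := mul_le_mul_of_nonneg_left (ih l) hM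
      _ = M ^ (m + 1) * x i := by ring

lemma tropSpectralRadius_le (hA : ∀ i j, 0 ≤ A i j) (hM : 0 ≤ M) (hx : ∀ j, 0 < x j)
    (h : ∀ i j, A i j * x j ≤ M * x i) : tropSpectralRadius A ≤ M := by
  refine Real.iSup_le (fun k => ?_) hM
  rw [Real.rpow_inv_le_iff_of_pos (tropTr_nonneg fun i => maxPow_nonneg hA _ i i) hM
    (by positivity), ← Nat.cast_succ, Real.rpow_natCast]
  exact Real.iSup_le (fun i => le_of_mul_le_mul_right
    (maxPow_mul_le_pow_mul hA hM (fun j => (hx j).le) h _ i i) (hx i)) (pow_nonneg hM _)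

lemma tropSpectralRadius_le_logChebyshev (hA : ∀ i j, 0 ≤ A i j) (hx : ∀ j, 0 < x j) :
    tropSpectralRadius A ≤ logChebyshev A x :=
  tropSpectralRadius_le hA (logChebyshev_nonneg hA hx) hx (mul_le_logChebyshev_mul hx)

lemma maxPow_apply_self_le_tropSpectralRadius_pow (hA : ∀ i j, 0 ≤ A i j) (k : Fin n)
    (l : Fin n) : maxPow A (k + 1) l l ≤ tropSpectralRadius A ^ (k.1 + 1) := by
  have hρ : 0 ≤ tropSpectralRadius A :=
    Real.iSup_nonneg fun k => Real.rpow_nonneg (tropTr_nonneg fun i => maxPow_nonneg hA _ i i) _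
  have hk : tropTr (maxPow A (k + 1)) ^ (((k.1 : ℝ) + 1)⁻¹) ≤ tropSpectralRadius A :=
    le_ciSup (Finite.bddAbove_range fun k : Fin n =>
      tropTr (maxPow A (k.1 + 1)) ^ (((k.1 : ℝ) + 1)⁻¹)) k
  rw [Real.rpow_inv_le_iff_of_pos (tropTr_nonneg fun i => maxPow_nonneg hA _ i i) hρ
    (by positivity), ← Nat.cast_succ, Real.rpow_natCast] at hk
  exact (le_ciSup (Finite.bddAbove_range fun i => maxPow A (k + 1) i i) l).trans hk

lemma exists_logChebyshev_le_tropSpectralRadius (hA : ∀ i j, 0 < A i j) (i₀ : Fin n) :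
    ∃ x : Fin n → ℝ, (∀ j, 0 < x j) ∧ logChebyshev A x ≤ tropSpectralRadius A := by
  have hA' : ∀ i j, 0 ≤ A i j := fun i j => (hA i j).le
  set ρ := tropSpectralRadius A
  have hρ : 0 < ρ := by
    have := maxPow_apply_self_le_tropSpectralRadius_pow hA' ⟨0, i₀.pos⟩ i₀
    rw [zero_add, pow_one, maxPow_one hA'] at this
    exact (hA i₀ i₀).trans_le this
  set B := ρ⁻¹ • A
  have hB : ∀ i j, 0 ≤ B i j := fun i j => mul_nonneg (inv_nonneg.2 hρ.le) (hA' i j)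
  have hcyc : ∀ (k : Fin n) l, maxPow B (k + 1) l l ≤ 1 := fun k l => by
    rw [maxPow_smul (inv_nonneg.2 hρ.le), inv_pow, inv_mul_le_one₀ (by positivity)]
    exact maxPow_apply_self_le_tropSpectralRadius_pow hA' k l
  set x := fun j => ⨆ k : Fin n, maxPow B (k + 1) j i₀
  have hx : ∀ j, 0 < x j := fun j => by
    have h := le_ciSup (Finite.bddAbove_range fun k : Fin n => maxPow B (k + 1) j i₀)
      ⟨0, i₀.pos⟩
    rw [zero_add, maxPow_one hB] at h
    exact (mul_pos (inv_pos.2 hρ) (hA j i₀)).trans_le h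
  refine ⟨x, hx, logChebyshev_le hρ.le hx fun i j => ?_⟩
  have h : ρ⁻¹ * A i j * x j ≤ x i := mul_iSup_maxPow_le_iSup_maxPow hB hcyc i j i₀
  rwa [mul_assoc, inv_mul_le_iff₀ hρ] at h

end LogChebyshev

/-- The infimum of the log-Chebyshev objective `max_{i,j} a i j * x j / x i` over
positive vectors `x` equals the max-algebraic spectral radius
`λ = max_{1 ≤ k ≤ n} (tr⊗(A^{⊗k}))^{1/k}`, and the infimum is attained. -/
theorem logChebyshev_min_eq_tropical_spectral_radius
    (n : ℕ) (hn : 1 ≤ n) (A : Matrix (Fin n) (Fin n) ℝ)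
    (hpos : ∀ i j, 0 < A i j) :
    sInf {v : ℝ | ∃ x : Fin n → ℝ, (∀ j, 0 < x j) ∧ v = ⨆ i, ⨆ j, A i j * x j / x i} =
        (⨆ k : Fin n, (tropTr (maxPow A (k.1 + 1))) ^ (((k.1 : ℝ) + 1)⁻¹)) ∧
      ∃ x : Fin n → ℝ, (∀ j, 0 < x j) ∧
        (⨆ i, ⨆ j, A i j * x j / x i) =
          ⨆ k : Fin n, (tropTr (maxPow A (k.1 + 1))) ^ (((k.1 : ℝ) + 1)⁻¹) := by
  have lower : ∀ x : Fin n → ℝ, (∀ j, 0 < x j) → tropSpectralRadius A ≤ logChebyshev A x :=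
    fun x hx => tropSpectralRadius_le_logChebyshev (fun i j => (hpos i j).le) hx
  obtain ⟨x, hx, hle⟩ := exists_logChebyshev_le_tropSpectralRadius hpos ⟨0, hn⟩
  have hx_eq : logChebyshev A x = tropSpectralRadius A := le_antisymm hle (lower x hx)
  have hleast : IsLeast {v | ∃ x : Fin n → ℝ, (∀ j, 0 < x j) ∧ v = logChebyshev A x}
      (tropSpectralRadius A) :=
    ⟨⟨x, hx, hx_eq.symm⟩, by rintro _ ⟨y, hy, rfl⟩; exact lower y hy⟩
  exact ⟨hleast.csInf_eq, x, hx, hx_eq⟩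
end

section
/- Let n ≥ 1, let A = (a_ij) be a positive n×n matrix, and let λ = max_{1≤k≤n} (tr⊗(A^{⊗k}))^{1/k} be its max-algebraic spectral radius (note λ > 0). Define the Kleene star B = (b_ij) by B = entrywise maximum over k = 0, …, n−1 of (λ^{−1}A)^{⊗k}. Then B has all entries positive, and a positive vector x = (x_j) in ℝⁿ satisfies max_{1≤i,j≤n} a_ij x_j / x_i = λ if and only if there exists a positive vector u = (u_j) in ℝⁿ with x_i = max_{1≤j≤n} b_ij u_j for all i. -/
namespace LCAux

lemma le_fsup {ι : Type*} [Fintype ι] (f : ι → ℝ) (i : ι) : f i ≤ ⨆ j, f j :=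
  le_ciSup (Set.finite_range f).bddAbove i

lemma fsup_le {ι : Type*} [Nonempty ι] {f : ι → ℝ} {a : ℝ} (h : ∀ i, f i ≤ a) :
    (⨆ i, f i) ≤ a := ciSup_le h

lemma mul_fsup {ι : Type*} [Fintype ι] [Nonempty ι] {c : ℝ} (hc : 0 < c) (f : ι → ℝ) :
    c * (⨆ i, f i) = ⨆ i, c * f i := by
  refine le_antisymm ?_ (fsup_le fun i => mul_le_mul_of_nonneg_left (le_fsup f i) hc.le)
  rw [mul_comm, ← le_div_iff₀ hc]
  exact fsup_le fun i => (le_div_iff₀ hc).2 (by rw [mul_comm]; exact le_fsup (fun i => c * f i) i)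

lemma fsup_mul {ι : Type*} [Fintype ι] [Nonempty ι] {c : ℝ} (hc : 0 < c) (f : ι → ℝ) :
    (⨆ i, f i) * c = ⨆ i, f i * c := by
  rw [mul_comm, mul_fsup hc]; simp [mul_comm]

variable {n : ℕ}

/-- weight of the path `i :: l ++ [j]`. -/
noncomputable def pw (C : Matrix (Fin n) (Fin n) ℝ) : Fin n → List (Fin n) → Fin n → ℝ
  | i, [], j => C i j
  | i, k :: l, j => C i k * pw C k l j

@[simp] lemma pw_nil (C : Matrix (Fin n) (Fin n) ℝ) (i j : Fin n) : pw C i [] j = C i j := rfl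

@[simp] lemma pw_cons (C : Matrix (Fin n) (Fin n) ℝ) (i k j : Fin n) (l : List (Fin n)) :
    pw C i (k :: l) j = C i k * pw C k l j := rfl

lemma pw_pos {C : Matrix (Fin n) (Fin n) ℝ} (hC : ∀ i j, 0 < C i j) :
    ∀ (i : Fin n) (l : List (Fin n)) (j : Fin n), 0 < pw C i l j
  | i, [], j => hC i j
  | i, k :: l, j => mul_pos (hC i k) (pw_pos hC k l j)

lemma pw_append (C : Matrix (Fin n) (Fin n) ℝ) :
    ∀ (l1 : List (Fin n)) (i k : Fin n) (l2 : List (Fin n)) (j : Fin n),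
      pw C i (l1 ++ (k :: l2)) j = pw C i l1 k * pw C k l2 j
  | [], i, k, l2, j => by simp
  | a :: l1, i, k, l2, j => by
      simp only [List.cons_append, pw_cons, pw_append C l1 a k l2 j, mul_assoc]


lemma maxPow_one [NeZero n] {C : Matrix (Fin n) (Fin n) ℝ} (hC : ∀ i j, 0 < C i j) (i j : Fin n) :
    maxPow C 1 i j = C i j := by
  show (⨆ k, maxPow C 0 i k * C k j) = C i j
  refine le_antisymm (fsup_le fun k => ?_) ?_
  · show (if i = k then (1:ℝ) else 0) * C k j ≤ C i j
    by_cases h : i = k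
    · subst h; simp
    · simp [h, (hC i j).le]
  · have := le_fsup (fun k => maxPow C 0 i k * C k j) i
    simpa [maxPow] using this

lemma ofFn_snoc {m : ℕ} (p : Fin m → Fin n) (k : Fin n) :
    List.ofFn (Fin.snoc p k) = List.ofFn p ++ [k] := by
  rw [List.ofFn_succ']
  simp [List.concat_eq_append]

lemma maxPow_pw [NeZero n] {C : Matrix (Fin n) (Fin n) ℝ} (hC : ∀ i j, 0 < C i j) :
    ∀ (m : ℕ) (i j : Fin n),
      maxPow C (m + 1) i j = ⨆ p : Fin m → Fin n, pw C i (List.ofFn p) j := by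
  intro m
  induction m with
  | zero =>
    intro i j
    rw [maxPow_one hC]
    refine le_antisymm ?_ (fsup_le fun p => by simp)
    have := le_fsup (fun p : Fin 0 → Fin n => pw C i (List.ofFn p) j) (fun x => x.elim0)
    simpa using this
  | succ m ih =>
    intro i j
    show (⨆ k, maxPow C (m+1) i k * C k j) = _
    have h1 : ∀ k : Fin n, maxPow C (m+1) i k * C k j
        = ⨆ p : Fin m → Fin n, pw C i (List.ofFn (Fin.snoc p k)) j := by
      intro k
      rw [ih i k, fsup_mul (hC k j)]
      congr 1; funext p
      rw [ofFn_snoc, pw_append]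
      simp
    simp only [h1]
    refine le_antisymm (fsup_le fun k => fsup_le fun p => le_fsup (fun q : Fin (m+1) → Fin n => pw C i (List.ofFn q) j) (Fin.snoc p k)) ?_
    refine fsup_le fun q => ?_
    have hq : q = Fin.snoc (Fin.init q) (q (Fin.last m)) := (Fin.snoc_init_self q).symm
    calc pw C i (List.ofFn q) j
        = pw C i (List.ofFn (Fin.snoc (Fin.init q) (q (Fin.last m)))) j := by rw [← hq]
      _ ≤ ⨆ p : Fin m → Fin n, pw C i (List.ofFn (Fin.snoc p (q (Fin.last m)))) j :=
          le_fsup (fun p : Fin m → Fin n => pw C i (List.ofFn (Fin.snoc p (q (Fin.last m)))) j) (Fin.init q)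
      _ ≤ _ := le_fsup (fun k => ⨆ p : Fin m → Fin n, pw C i (List.ofFn (Fin.snoc p k)) j)
          (q (Fin.last m))

lemma pw_le_maxPow [NeZero n] {C : Matrix (Fin n) (Fin n) ℝ} (hC : ∀ i j, 0 < C i j)
    (i j : Fin n) (l : List (Fin n)) : pw C i l j ≤ maxPow C (l.length + 1) i j := by
  rw [maxPow_pw hC]
  have : pw C i (List.ofFn l.get) j ≤ ⨆ p : Fin l.length → Fin n, pw C i (List.ofFn p) j :=
    le_fsup (fun p : Fin l.length → Fin n => pw C i (List.ofFn p) j) l.get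
  simpa using this

lemma maxPow_diag_pos {C : Matrix (Fin n) (Fin n) ℝ} (hC : ∀ i j, 0 < C i j) :
    ∀ (m : ℕ) (i : Fin n), 0 < maxPow C m i i
  | 0, i => by simp [maxPow]
  | m + 1, i => lt_of_lt_of_le (mul_pos (maxPow_diag_pos hC m i) (hC i i))
      (le_fsup (fun k => maxPow C m i k * C k i) i)

lemma maxPow_nonneg {C : Matrix (Fin n) (Fin n) ℝ} (hC : ∀ i j, 0 < C i j) :
    ∀ (m : ℕ) (i j : Fin n), 0 ≤ maxPow C m i j
  | 0, i, j => by simp [maxPow]; split <;> norm_num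
  | m + 1, i, j => le_trans (le_of_lt (mul_pos (maxPow_diag_pos hC m i) (hC i j)))
      (le_fsup (fun k => maxPow C m i k * C k j) i)

lemma maxPow_smul [NeZero n] {A : Matrix (Fin n) (Fin n) ℝ} (hA : ∀ i j, 0 < A i j)
    {c : ℝ} (hc : 0 < c) :
    ∀ (m : ℕ) (i j : Fin n), maxPow (c • A) m i j = c ^ m * maxPow A m i j := by
  intro m
  induction m with
  | zero => intro i j; simp [maxPow]
  | succ m ih =>
    intro i j
    show (⨆ k, maxPow (c • A) m i k * (c • A) k j) = c ^ (m+1) * ⨆ k, maxPow A m i k * A k j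
    rw [mul_fsup (pow_pos hc (m+1))]
    congr 1; funext k
    rw [ih i k]
    simp [Matrix.smul_apply, smul_eq_mul]
    ring


lemma dup_split {α : Type*} :
    ∀ (s : List α), ¬ s.Nodup → ∃ (l1 : List α) (v : α) (l2 l3 : List α), s = l1 ++ (v :: (l2 ++ (v :: l3)))
  | [], h => absurd List.nodup_nil h
  | a :: t, h => by
    by_cases ha : a ∈ t
    · obtain ⟨l2, l3, rfl⟩ := List.append_of_mem ha
      exact ⟨[], a, l2, l3, rfl⟩
    · have ht : ¬ t.Nodup := fun hnd => h (List.nodup_cons.2 ⟨ha, hnd⟩)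
      obtain ⟨l1, v, l2, l3, rfl⟩ := dup_split t ht
      exact ⟨a :: l1, v, l2, l3, rfl⟩

lemma not_nodup_of_len {s : List (Fin n)} (h : n < s.length) : ¬ s.Nodup := by
  intro hd
  have := hd.length_le_card
  simp at this
  omega

lemma cycle_le_one [NeZero n] {C : Matrix (Fin n) (Fin n) ℝ} (hC : ∀ i j, 0 < C i j)
    (htr : ∀ m, 1 ≤ m → m ≤ n → tropTr (maxPow C m) ≤ 1) :
    ∀ (m : ℕ) (l : List (Fin n)) (i : Fin n), l.length = m → pw C i l i ≤ 1 := by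
  intro m
  induction m using Nat.strong_induction_on with
  | _ m ih =>
  intro l i hl
  by_cases hm : m + 1 ≤ n
  · calc pw C i l i ≤ maxPow C (l.length + 1) i i := pw_le_maxPow hC i i l
      _ ≤ tropTr (maxPow C (l.length + 1)) := le_fsup (fun k => maxPow C (l.length + 1) k k) i
      _ ≤ 1 := htr _ (by omega) (by omega)
  · have hlen : n < (i :: l).length := by simp [hl]; omega
    obtain ⟨l1, v, l2, l3, hs⟩ := dup_split _ (not_nodup_of_len hlen)
    cases l1 with
    | nil =>
      simp only [List.nil_append, List.cons.injEq] at hs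
      obtain ⟨rfl, rfl⟩ := hs
      rw [pw_append]
      have hlen2 : l2.length + (l3.length + 1) = m := by simpa using hl
      have h2 : pw C i l2 i ≤ 1 := ih l2.length (by omega) l2 i rfl
      have h3 : pw C i l3 i ≤ 1 := ih l3.length (by omega) l3 i rfl
      have p2 := pw_pos hC i l2 i
      have p3 := pw_pos hC i l3 i
      nlinarith
    | cons a l1' =>
      simp only [List.cons_append, List.cons.injEq] at hs
      obtain ⟨rfl, rfl⟩ := hs
      rw [pw_append, pw_append]
      have hlen2 : l1'.length + (l2.length + (l3.length + 1) + 1) = m := by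
        simpa using hl
      have h2 : pw C v l2 v ≤ 1 := ih l2.length (by omega) l2 v rfl
      have h13 : pw C i l1' v * pw C v l3 i ≤ 1 := by
        rw [← pw_append]
        exact ih (l1'.length + (l3.length + 1)) (by omega) _ i (by simp)
      have p1 := pw_pos hC i l1' v
      have p3 := pw_pos hC v l3 i
      calc pw C i l1' v * (pw C v l2 v * pw C v l3 i)
          = pw C v l2 v * (pw C i l1' v * pw C v l3 i) := by ring
        _ ≤ 1 * 1 := mul_le_mul h2 h13 (by positivity) zero_le_one
        _ = 1 := one_mul 1


lemma one_le_B_diag [NeZero n] {C B : Matrix (Fin n) (Fin n) ℝ}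
    (hB : ∀ i j, B i j = ⨆ k : Fin n, maxPow C k.1 i j) (i : Fin n) : 1 ≤ B i i := by
  rw [hB]
  have := le_fsup (fun k : Fin n => maxPow C k.1 i i) ⟨0, Nat.pos_of_ne_zero (NeZero.ne n)⟩
  simpa [maxPow] using this

lemma maxPow_lt_le_B {C B : Matrix (Fin n) (Fin n) ℝ}
    (hB : ∀ i j, B i j = ⨆ k : Fin n, maxPow C k.1 i j) {m : ℕ} (hm : m < n) (i j : Fin n) :
    maxPow C m i j ≤ B i j := by
  rw [hB]; exact le_fsup (fun k : Fin n => maxPow C k.1 i j) ⟨m, hm⟩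

lemma B_nonneg [NeZero n] {C B : Matrix (Fin n) (Fin n) ℝ} (hC : ∀ i j, 0 < C i j)
    (hB : ∀ i j, B i j = ⨆ k : Fin n, maxPow C k.1 i j) (i j : Fin n) : 0 ≤ B i j :=
  le_trans (maxPow_nonneg hC 0 i j)
    (maxPow_lt_le_B hB (Nat.pos_of_ne_zero (NeZero.ne n)) i j)

lemma pw_le_B [NeZero n] {C B : Matrix (Fin n) (Fin n) ℝ} (hC : ∀ i j, 0 < C i j)
    (htr : ∀ m, 1 ≤ m → m ≤ n → tropTr (maxPow C m) ≤ 1)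
    (hB : ∀ i j, B i j = ⨆ k : Fin n, maxPow C k.1 i j) :
    ∀ (m : ℕ) (l : List (Fin n)) (i j : Fin n), l.length = m → pw C i l j ≤ B i j := by
  intro m
  induction m using Nat.strong_induction_on with
  | _ m ih =>
  intro l i j hl
  by_cases hm : m + 2 ≤ n
  · exact le_trans (pw_le_maxPow hC i j l)
      (maxPow_lt_le_B hB (by rw [hl]; omega) i j)
  · have hlen : n < (i :: (l ++ [j])).length := by simp [hl]; omega
    obtain ⟨l1, v, l2, l3, hs⟩ := dup_split _ (not_nodup_of_len hlen)
    cases l1 with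
    | nil =>
      simp only [List.nil_append, List.cons.injEq] at hs
      obtain ⟨rfl, heq⟩ := hs
      rcases List.eq_nil_or_concat l3 with rfl | ⟨t, b, rfl⟩
      · have heq2 : l ++ [j] = l2 ++ [i] := by simpa using heq
        obtain ⟨rfl, hjv⟩ := List.append_inj' heq2 rfl
        have hj : j = i := by simpa using hjv
        rw [hj]
        exact le_trans (cycle_le_one hC htr l.length l i rfl) (one_le_B_diag hB i)
      · rw [List.concat_eq_append] at heq
        have heq2 : l ++ [j] = (l2 ++ (i :: t)) ++ [b] := by rw [heq]; simp
        obtain ⟨rfl, hjb⟩ := List.append_inj' heq2 rfl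
        have hj : j = b := by simpa using hjb
        subst hj
        have hlen2 : l2.length + (t.length + 1) = m := by simpa using hl
        rw [pw_append]
        have hcyc : pw C i l2 i ≤ 1 := cycle_le_one hC htr l2.length l2 i rfl
        have hrest : pw C i t j ≤ B i j := ih t.length (by omega) t i j rfl
        calc pw C i l2 i * pw C i t j ≤ 1 * B i j :=
              mul_le_mul hcyc hrest (pw_pos hC i t j).le zero_le_one
          _ = B i j := one_mul _
    | cons a l1' =>
      simp only [List.cons_append, List.cons.injEq] at hs
      obtain ⟨rfl, heq⟩ := hs
      rcases List.eq_nil_or_concat l3 with rfl | ⟨t, b, rfl⟩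
      · have heq2 : l ++ [j] = (l1' ++ (v :: l2)) ++ [v] := by rw [heq]; simp
        obtain ⟨rfl, hjv⟩ := List.append_inj' heq2 rfl
        have hj : j = v := by simpa using hjv
        subst hj
        have hlen2 : l1'.length + (l2.length + 1) = m := by simpa using hl
        rw [pw_append]
        have hcyc : pw C j l2 j ≤ 1 := cycle_le_one hC htr l2.length l2 j rfl
        have hrest : pw C i l1' j ≤ B i j := ih l1'.length (by omega) l1' i j rfl
        calc pw C i l1' j * pw C j l2 j ≤ B i j * 1 :=
              mul_le_mul hrest hcyc (pw_pos hC j l2 j).le (B_nonneg hC hB i j)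
          _ = B i j := mul_one _
      · rw [List.concat_eq_append] at heq
        have heq2 : l ++ [j] = (l1' ++ (v :: (l2 ++ (v :: t)))) ++ [b] := by rw [heq]; simp
        obtain ⟨rfl, hjb⟩ := List.append_inj' heq2 rfl
        have hj : j = b := by simpa using hjb
        subst hj
        have hlen2 : l1'.length + (l2.length + (t.length + 1) + 1) = m := by simpa using hl
        rw [pw_append, pw_append]
        have hcyc : pw C v l2 v ≤ 1 := cycle_le_one hC htr l2.length l2 v rfl
        have hrest : pw C i (l1' ++ (v :: t)) j ≤ B i j :=
          ih (l1'.length + (t.length + 1)) (by omega) _ i j (by simp)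
        rw [pw_append] at hrest
        calc pw C i l1' v * (pw C v l2 v * pw C v t j)
            = pw C v l2 v * (pw C i l1' v * pw C v t j) := by ring
          _ ≤ 1 * (pw C i l1' v * pw C v t j) :=
              mul_le_mul_of_nonneg_right hcyc
                (mul_pos (pw_pos hC i l1' v) (pw_pos hC v t j)).le
          _ = pw C i l1' v * pw C v t j := one_mul _
          _ ≤ B i j := hrest

lemma maxPow_le_B [NeZero n] {C B : Matrix (Fin n) (Fin n) ℝ} (hC : ∀ i j, 0 < C i j)
    (htr : ∀ m, 1 ≤ m → m ≤ n → tropTr (maxPow C m) ≤ 1)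
    (hB : ∀ i j, B i j = ⨆ k : Fin n, maxPow C k.1 i j) :
    ∀ (m : ℕ) (i j : Fin n), maxPow C m i j ≤ B i j := by
  intro m i j
  cases m with
  | zero => exact maxPow_lt_le_B hB (Nat.pos_of_ne_zero (NeZero.ne n)) i j
  | succ m =>
    rw [maxPow_pw hC]
    exact fsup_le fun p => pw_le_B hC htr hB _ _ i j rfl

lemma maxPow_mul_le [NeZero n] {C : Matrix (Fin n) (Fin n) ℝ} (hC : ∀ i j, 0 < C i j)
    {x : Fin n → ℝ} (hx : ∀ j, 0 < x j) {mu : ℝ} (hmu : 0 < mu)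
    (h : ∀ i j, C i j * x j ≤ mu * x i) :
    ∀ (m : ℕ) (i j : Fin n), maxPow C m i j * x j ≤ mu ^ m * x i := by
  intro m
  induction m with
  | zero =>
    intro i j
    by_cases hij : i = j
    · subst hij; simp [maxPow]
    · have h0 : maxPow C 0 i j = 0 := by simp [maxPow, hij]
      rw [h0, zero_mul]
      exact mul_nonneg (pow_nonneg hmu.le 0) (hx i).le
  | succ m ih =>
    intro i j
    show (⨆ k, maxPow C m i k * C k j) * x j ≤ mu ^ (m+1) * x i
    rw [fsup_mul (hx j)]
    refine fsup_le fun k => ?_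
    calc maxPow C m i k * C k j * x j = maxPow C m i k * (C k j * x j) := by ring
      _ ≤ maxPow C m i k * (mu * x k) :=
          mul_le_mul_of_nonneg_left (h k j) (maxPow_nonneg hC m i k)
      _ = mu * (maxPow C m i k * x k) := by ring
      _ ≤ mu * (mu ^ m * x i) := mul_le_mul_of_nonneg_left (ih i k) hmu.le
      _ = mu ^ (m+1) * x i := by ring


end LCAux

open LCAux

/-- Complete solution of the log-Chebyshev approximation problem: with `λ` the
max-algebraic spectral radius of the positive matrix `A` and `B = (λ⁻¹ A)*` the
Kleene star, the matrix `B` is positive, and a positive vector `x` attains the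
minimum value `λ` of the objective `max_{i,j} a i j * x j / x i` iff
`x = B ⊗ u` for some positive vector `u`. -/
theorem logChebyshev_solutions_eq_kleene_span
    (n : ℕ) (hn : 1 ≤ n) (A : Matrix (Fin n) (Fin n) ℝ)
    (hpos : ∀ i j, 0 < A i j)
    (lam : ℝ)
    (hlam : lam = ⨆ k : Fin n, (tropTr (maxPow A (k.1 + 1))) ^ (((k.1 : ℝ) + 1)⁻¹))
    (B : Matrix (Fin n) (Fin n) ℝ)
    (hB : ∀ i j, B i j = ⨆ k : Fin n, (maxPow (lam⁻¹ • A) k.1) i j) :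
    (∀ i j, 0 < B i j) ∧
      ∀ x : Fin n → ℝ, (∀ j, 0 < x j) →
        ((⨆ i, ⨆ j, A i j * x j / x i) = lam ↔
          ∃ u : Fin n → ℝ, (∀ j, 0 < u j) ∧ ∀ i, x i = ⨆ j, B i j * u j) := by
  haveI : NeZero n := ⟨by omega⟩
  have npos : 0 < n := hn
  have htrApos : ∀ m : ℕ, 0 < tropTr (maxPow A m) := fun m =>
    lt_of_lt_of_le (maxPow_diag_pos hpos m ⟨0, npos⟩)
      (le_fsup (fun i => maxPow A m i i) ⟨0, npos⟩)
  have hlam0 : 0 < lam := by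
    have h0 : tropTr (maxPow A (((⟨0, npos⟩ : Fin n)).1 + 1))
        ^ ((((⟨0, npos⟩ : Fin n).1 : ℝ) + 1)⁻¹) ≤ lam := by
      rw [hlam]
      exact le_fsup (fun k : Fin n => tropTr (maxPow A (k.1+1)) ^ (((k.1:ℝ)+1)⁻¹)) ⟨0, npos⟩
    simp only [Fin.val_mk, Nat.cast_zero, zero_add, inv_one, Real.rpow_one, zero_add] at h0
    exact lt_of_lt_of_le (htrApos 1) h0
  set C := lam⁻¹ • A with hCdef
  have hCpos : ∀ i j, 0 < C i j := fun i j => by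
    rw [hCdef]
    show 0 < lam⁻¹ * A i j
    exact mul_pos (inv_pos.2 hlam0) (hpos i j)
  have hsm : ∀ m i j, maxPow C m i j = (lam⁻¹)^m * maxPow A m i j := by
    intro m i j; rw [hCdef]; exact maxPow_smul hpos (inv_pos.2 hlam0) m i j
  have htrC : ∀ m, tropTr (maxPow C m) = (lam⁻¹)^m * tropTr (maxPow A m) := by
    intro m
    unfold tropTr
    simp only [hsm]
    exact (mul_fsup (pow_pos (inv_pos.2 hlam0) m) _).symm
  have hterm_le : ∀ m : ℕ, 1 ≤ m → m ≤ n → tropTr (maxPow A m) ≤ lam ^ m := by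
    intro m h1 h2
    obtain ⟨m', rfl⟩ : ∃ m', m = m' + 1 := ⟨m - 1, by omega⟩
    have hk : tropTr (maxPow A (m'+1)) ^ (((m' : ℝ)+1)⁻¹) ≤ lam := by
      rw [hlam]
      exact le_fsup (fun k : Fin n => tropTr (maxPow A (k.1+1)) ^ (((k.1:ℝ)+1)⁻¹)) ⟨m', by omega⟩
    have hcast : ((m' : ℝ) + 1) = ((m' + 1 : ℕ) : ℝ) := by push_cast; ring
    have hpl := pow_le_pow_left₀ (Real.rpow_nonneg (htrApos (m'+1)).le _) hk (m'+1)
    rwa [hcast, Real.rpow_inv_natCast_pow (htrApos (m'+1)).le (Nat.succ_ne_zero m')] at hpl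
  have htr1 : ∀ m, 1 ≤ m → m ≤ n → tropTr (maxPow C m) ≤ 1 := by
    intro m h1 h2
    rw [htrC]
    calc (lam⁻¹)^m * tropTr (maxPow A m) ≤ (lam⁻¹)^m * lam^m :=
        mul_le_mul_of_nonneg_left (hterm_le m h1 h2) (pow_nonneg (inv_nonneg.2 hlam0.le) m)
      _ = 1 := by rw [← mul_pow, inv_mul_cancel₀ hlam0.ne', one_pow]
  obtain ⟨k0, hk0max⟩ :=
    Finite.exists_max (fun k : Fin n => tropTr (maxPow A (k.1+1)) ^ (((k.1:ℝ)+1)⁻¹))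
  have hlamk0 : lam = tropTr (maxPow A (k0.1+1)) ^ (((k0.1:ℝ)+1)⁻¹) := by
    refine le_antisymm ?_ ?_
    · rw [hlam]; exact fsup_le hk0max
    · rw [hlam]
      exact le_fsup (fun k : Fin n => tropTr (maxPow A (k.1+1)) ^ (((k.1:ℝ)+1)⁻¹)) k0
  have hlampow : lam ^ (k0.1 + 1) = tropTr (maxPow A (k0.1 + 1)) := by
    rw [hlamk0]
    have hcast : ((k0.1 : ℝ) + 1) = ((k0.1 + 1 : ℕ) : ℝ) := by push_cast; ring
    rw [hcast]
    exact Real.rpow_inv_natCast_pow (htrApos (k0.1+1)).le (Nat.succ_ne_zero _)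
  have htrCm0 : tropTr (maxPow C (k0.1 + 1)) = 1 := by
    rw [htrC, ← hlampow, ← mul_pow, inv_mul_cancel₀ hlam0.ne', one_pow]
  have hBpos : ∀ i j, 0 < B i j := by
    intro i j
    by_cases hij : i = j
    · subst hij; exact lt_of_lt_of_le one_pos (one_le_B_diag hB i)
    · have h2n : 1 < n := by
        rcases i with ⟨iv, hi⟩; rcases j with ⟨jv, hj⟩
        have : iv ≠ jv := fun h => hij (by simp [Fin.ext_iff, h])
        omega
      have hle := maxPow_lt_le_B hB h2n i j
      rw [maxPow_one hCpos] at hle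
      exact lt_of_lt_of_le (hCpos i j) hle
  refine ⟨hBpos, ?_⟩
  intro x hx
  have key_lower : ∀ (y : Fin n → ℝ), (∀ j, 0 < y j) →
      lam ≤ ⨆ i, ⨆ j, A i j * y j / y i := by
    intro y hy
    set ν := ⨆ i, ⨆ j, A i j * y j / y i with hν
    have hterm : ∀ i j, A i j * y j / y i ≤ ν := by
      intro i j
      calc A i j * y j / y i ≤ ⨆ j', A i j' * y j' / y i :=
            le_fsup (fun j' => A i j' * y j' / y i) j
        _ ≤ ν := le_fsup (fun i' => ⨆ j', A i' j' * y j' / y i') i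
    have hν0 : 0 < ν :=
      lt_of_lt_of_le (div_pos (mul_pos (hpos ⟨0,npos⟩ ⟨0,npos⟩) (hy ⟨0,npos⟩)) (hy ⟨0,npos⟩))
        (hterm ⟨0,npos⟩ ⟨0,npos⟩)
    have hCy : ∀ i j, C i j * y j ≤ (lam⁻¹ * ν) * y i := by
      intro i j
      have h1 : A i j * y j ≤ ν * y i := (div_le_iff₀ (hy i)).1 (hterm i j)
      have hC : C i j = lam⁻¹ * A i j := by rw [hCdef]; rfl
      rw [hC]
      calc lam⁻¹ * A i j * y j = lam⁻¹ * (A i j * y j) := by ring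
        _ ≤ lam⁻¹ * (ν * y i) := mul_le_mul_of_nonneg_left h1 (inv_nonneg.2 hlam0.le)
        _ = (lam⁻¹ * ν) * y i := by ring
    have hμ0 : 0 < lam⁻¹ * ν := mul_pos (inv_pos.2 hlam0) hν0
    have hpowle := maxPow_mul_le hCpos hy hμ0 hCy (k0.1 + 1)
    have hdiag : ∀ i, maxPow C (k0.1+1) i i ≤ (lam⁻¹ * ν) ^ (k0.1+1) := fun i =>
      le_of_mul_le_mul_right (hpowle i i) (hy i)
    have h1le : 1 ≤ (lam⁻¹ * ν) ^ (k0.1+1) := by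
      rw [← htrCm0]
      exact fsup_le hdiag
    have hμ1 : 1 ≤ lam⁻¹ * ν := by
      by_contra hlt
      push_neg at hlt
      have := pow_lt_one₀ (n := k0.1 + 1) hμ0.le hlt (by omega)
      linarith
    calc lam = lam * 1 := (mul_one lam).symm
      _ ≤ lam * (lam⁻¹ * ν) := mul_le_mul_of_nonneg_left hμ1 hlam0.le
      _ = ν := by field_simp
  have hAC : ∀ i j, A i j = lam * C i j := by
    intro i j
    have hC : C i j = lam⁻¹ * A i j := by rw [hCdef]; rfl
    rw [hC]
    field_simp
  constructor
  · intro heq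
    have hsub : ∀ i j, C i j * x j ≤ x i := by
      intro i j
      have h1 : A i j * x j / x i ≤ lam := by
        rw [← heq]
        calc A i j * x j / x i ≤ ⨆ j', A i j' * x j' / x i :=
              le_fsup (fun j' => A i j' * x j' / x i) j
          _ ≤ _ := le_fsup (fun i' => ⨆ j', A i' j' * x j' / x i') i
      have h2 : A i j * x j ≤ lam * x i := (div_le_iff₀ (hx i)).1 h1
      have hC : C i j = lam⁻¹ * A i j := by rw [hCdef]; rfl
      rw [hC]
      calc lam⁻¹ * A i j * x j = lam⁻¹ * (A i j * x j) := by ring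
        _ ≤ lam⁻¹ * (lam * x i) := mul_le_mul_of_nonneg_left h2 (inv_nonneg.2 hlam0.le)
        _ = x i := by field_simp
    refine ⟨x, hx, fun i => ?_⟩
    have hub : ∀ j, B i j * x j ≤ x i := by
      intro j
      rw [hB i j, fsup_mul (hx j)]
      refine fsup_le fun k => ?_
      have := maxPow_mul_le hCpos hx one_pos
        (fun i' j' => by rw [one_mul]; exact hsub i' j') k.1 i j
      simpa using this
    refine le_antisymm ?_ (fsup_le hub)
    calc x i = 1 * x i := (one_mul _).symm
      _ ≤ B i i * x i := mul_le_mul_of_nonneg_right (one_le_B_diag hB i) (hx i).le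
      _ ≤ ⨆ j, B i j * x j := le_fsup (fun j => B i j * x j) i
  · rintro ⟨u, hu, hxu⟩
    have hCB : ∀ i j m, C i j * B j m ≤ B i m := by
      intro i j m
      rw [hB j m, mul_fsup (hCpos i j)]
      refine fsup_le fun k => ?_
      rcases k with ⟨kv, hk⟩
      cases kv with
      | zero =>
        show C i j * maxPow C 0 j m ≤ B i m
        by_cases hjm : j = m
        · subst hjm
          have h0 : maxPow C 0 j j = 1 := by simp [maxPow]
          rw [h0, mul_one]
          exact pw_le_B hCpos htr1 hB 0 [] i j rfl
        · have h0 : maxPow C 0 j m = 0 := by simp [maxPow, hjm]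
          rw [h0, mul_zero]
          exact B_nonneg hCpos hB i m
      | succ t =>
        show C i j * maxPow C (t+1) j m ≤ B i m
        rw [maxPow_pw hCpos, mul_fsup (hCpos i j)]
        refine fsup_le fun p => ?_
        have hpw : C i j * pw C j (List.ofFn p) m = pw C i (j :: List.ofFn p) m := rfl
        rw [hpw]
        exact pw_le_B hCpos htr1 hB _ _ i m rfl
    have hsub : ∀ i j, C i j * x j ≤ x i := by
      intro i j
      rw [hxu j, hxu i, mul_fsup (hCpos i j)]
      refine fsup_le fun m => ?_
      calc C i j * (B j m * u m) = (C i j * B j m) * u m := by ring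
        _ ≤ B i m * u m := mul_le_mul_of_nonneg_right (hCB i j m) (hu m).le
        _ ≤ ⨆ m', B i m' * u m' := le_fsup (fun m' => B i m' * u m') m
    refine le_antisymm ?_ (key_lower x hx)
    refine fsup_le fun i => fsup_le fun j => ?_
    rw [div_le_iff₀ (hx i), hAC i j]
    calc lam * C i j * x j = lam * (C i j * x j) := by ring
      _ ≤ lam * x i := mul_le_mul_of_nonneg_left (hsub i j) hlam0.le
end

section
/- Let n ≥ 1 and let A = (a_ij) be a positive n×n matrix. Then for every integer k ≥ 1, (tr⊗(A^{⊗k}))^{1/k} ≤ max_{1≤j≤n} (tr⊗(A^{⊗j}))^{1/j}; that is, the supremum over all k ≥ 1 of the k-th roots of the max-times traces of the max-times powers of A is attained among k ∈ {1, …, n}. -/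
lemma maxPow_succ' {n : ℕ} (A : Matrix (Fin n) (Fin n) ℝ) (k : ℕ) (i j : Fin n) :
    maxPow A (k+1) i j = ⨆ m, maxPow A k i m * A m j := rfl

lemma maxPow_nonneg_s8 {n : ℕ} (A : Matrix (Fin n) (Fin n) ℝ) (h : ∀ i j, 0 ≤ A i j) :
    ∀ k i j, 0 ≤ maxPow A k i j := by
  intro k
  induction k with
  | zero => intro i j; simp only [maxPow]; split <;> norm_num
  | succ k ih =>
    intro i j
    rw [maxPow_succ']
    exact Real.iSup_nonneg (fun m => mul_nonneg (ih i m) (h m j))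

lemma maxPow_one_s8 {n : ℕ} (A : Matrix (Fin n) (Fin n) ℝ) (h : ∀ i j, 0 ≤ A i j)
    (i j : Fin n) : maxPow A 1 i j = A i j := by
  haveI : Nonempty (Fin n) := ⟨i⟩
  rw [maxPow_succ']
  refine le_antisymm (ciSup_le fun m => ?_) ?_
  · simp only [maxPow]
    by_cases hm : i = m
    · subst hm; simp
    · simp [hm, h i j]
  · have := le_ciSup (Finite.bddAbove_range fun m => maxPow A 0 i m * A m j) i
    simpa [maxPow] using this

lemma walk_le {n : ℕ} (A : Matrix (Fin n) (Fin n) ℝ) (h : ∀ i j, 0 ≤ A i j) :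
    ∀ (k : ℕ) (f : ℕ → Fin n),
      (∏ t ∈ Finset.range k, A (f t) (f (t+1))) ≤ maxPow A k (f 0) (f k) := by
  intro k
  induction k with
  | zero => intro f; simp [maxPow]
  | succ k ih =>
    intro f
    rw [Finset.prod_range_succ, maxPow_succ']
    calc (∏ t ∈ Finset.range k, A (f t) (f (t+1))) * A (f k) (f (k+1))
        ≤ maxPow A k (f 0) (f k) * A (f k) (f (k+1)) :=
          mul_le_mul_of_nonneg_right (ih f) (h _ _)
      _ ≤ _ := le_ciSup (Finite.bddAbove_range fun m => maxPow A k (f 0) m * A m (f (k+1))) (f k)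

lemma exists_walk {n : ℕ} (A : Matrix (Fin n) (Fin n) ℝ) (h : ∀ i j, 0 ≤ A i j) :
    ∀ k, 1 ≤ k → ∀ i j : Fin n, ∃ f : ℕ → Fin n, f 0 = i ∧ f k = j ∧
      maxPow A k i j = ∏ t ∈ Finset.range k, A (f t) (f (t+1)) := by
  intro k hk
  induction k, hk using Nat.le_induction with
  | base =>
    intro i j
    refine ⟨fun t => if t = 0 then i else j, by simp, by simp, ?_⟩
    simp [maxPow_one_s8 A h]
  | succ k hk ih =>
    intro i j
    have hne : Nonempty (Fin n) := ⟨i⟩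
    obtain ⟨m0, hm0⟩ := Finite.exists_max (fun m => maxPow A k i m * A m j)
    have hsup : maxPow A (k+1) i j = maxPow A k i m0 * A m0 j := by
      rw [maxPow_succ']
      exact le_antisymm (ciSup_le hm0)
        (le_ciSup (Finite.bddAbove_range fun m => maxPow A k i m * A m j) m0)
    obtain ⟨f, hf0, hfk, hfw⟩ := ih i m0
    refine ⟨fun t => if t ≤ k then f t else j, by simp [hf0], by simp, ?_⟩
    rw [Finset.prod_range_succ]
    have h1 : ∀ t ∈ Finset.range k,
        A ((fun t => if t ≤ k then f t else j) t) ((fun t => if t ≤ k then f t else j) (t+1))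
        = A (f t) (f (t+1)) := by
      intro t ht
      simp only [Finset.mem_range] at ht
      simp [Nat.le_of_lt ht, Nat.succ_le_of_lt ht]
    rw [Finset.prod_congr rfl h1, hsup, hfw]
    simp [hfk]

lemma maxPow_pos {n : ℕ} (A : Matrix (Fin n) (Fin n) ℝ) (hpos : ∀ i j, 0 < A i j) :
    ∀ k, 1 ≤ k → ∀ i j, 0 < maxPow A k i j := by
  intro k hk
  induction k, hk using Nat.le_induction with
  | base => intro i j; rw [maxPow_one_s8 A (fun i j => (hpos i j).le)]; exact hpos i j
  | succ k hk ih =>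
    intro i j
    rw [maxPow_succ']
    exact lt_of_lt_of_le (mul_pos (ih i i) (hpos i j))
      (le_ciSup (Finite.bddAbove_range fun m => maxPow A k i m * A m j) i)

lemma entry_le_tropTr {n : ℕ} (B : Matrix (Fin n) (Fin n) ℝ) (i : Fin n) :
    B i i ≤ tropTr B :=
  le_ciSup (Finite.bddAbove_range fun i => B i i) i

lemma cut_cycle {n : ℕ} (A : Matrix (Fin n) (Fin n) ℝ) (hpos : ∀ i j, 0 < A i j)
    (k : ℕ) (hk : n < k) (f : ℕ → Fin n) (hf : f k = f 0) :
    ∃ ℓ, 1 ≤ ℓ ∧ ℓ ≤ n ∧ ℓ < k ∧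
      (∏ t ∈ Finset.range k, A (f t) (f (t+1))) ≤
        maxPow A (k - ℓ) (f 0) (f 0) * tropTr (maxPow A ℓ) := by
  have hnn : ∀ i j, 0 ≤ A i j := fun i j => (hpos i j).le
  haveI : Nonempty (Fin n) := ⟨f 0⟩
  -- pigeonhole among f 0, ..., f n
  obtain ⟨a, b, hab, heq⟩ :=
    Fintype.exists_ne_map_eq_of_card_lt (fun a : Fin (n+1) => f a.1) (by simp)
  obtain ⟨s, t, hstlt, htn, hst⟩ : ∃ s t : ℕ, s < t ∧ t ≤ n ∧ f s = f t := by
    rcases lt_trichotomy a.1 b.1 with h | h | h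
    · exact ⟨a.1, b.1, h, Nat.lt_succ_iff.mp b.2, heq⟩
    · exact absurd (Fin.ext h) hab
    · exact ⟨b.1, a.1, h, Nat.lt_succ_iff.mp a.2, heq.symm⟩
  set ℓ := t - s with hℓ
  set m := k - t with hm
  have hsl : s + ℓ = t := by omega
  have hkeq : k = s + (ℓ + m) := by omega
  have hcyc : f (s + ℓ) = f s := by rw [hsl]; exact hst.symm
  set g : ℕ → Fin n := fun u => if u < s then f u else f (u + ℓ) with hgdef
  set F : ℕ → ℝ := fun u => A (f u) (f (u+1)) with hF
  -- split the walk product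
  have hsplit : (∏ u ∈ Finset.range k, F u) =
      ((∏ u ∈ Finset.range s, F u) * (∏ u ∈ Finset.range m, F (s + (ℓ + u)))) *
        (∏ u ∈ Finset.range ℓ, F (s + u)) := by
    rw [hkeq, Finset.prod_range_add, Finset.prod_range_add]
    ring
  -- the shortened walk
  have hgprod : (∏ u ∈ Finset.range (s + m), (fun u => A (g u) (g (u+1))) u) =
      (∏ u ∈ Finset.range s, F u) * (∏ u ∈ Finset.range m, F (s + (ℓ + u))) := by
    rw [Finset.prod_range_add]
    congr 1
    · refine Finset.prod_congr rfl fun u hu => ?_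
      simp only [Finset.mem_range] at hu
      have hgu : g u = f u := by simp [hgdef, hu]
      have hgu1 : g (u+1) = f (u+1) := by
        by_cases h1 : u + 1 < s
        · simp [hgdef, h1]
        · have : u + 1 = s := by omega
          simp only [hgdef, this, lt_irrefl, if_neg (lt_irrefl s)]
          rw [← this] at hcyc ⊢
          exact hcyc
      rw [hgu, hgu1]
    · refine Finset.prod_congr rfl fun u hu => ?_
      have h1 : ¬ (s + u < s) := by omega
      have h2 : ¬ (s + u + 1 < s) := by omega
      simp only [hgdef, if_neg h1, if_neg h2, hF]
      congr 1 <;> exact congrArg f (by omega)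
  have hg0 : g 0 = f 0 := by
    by_cases h0 : 0 < s
    · simp [hgdef, h0]
    · have hs0 : s = 0 := by omega
      simp only [hgdef, hs0, lt_irrefl, if_neg (lt_irrefl 0)]
      rw [hs0] at hcyc
      simpa using hcyc
  have hgsm : g (s + m) = f 0 := by
    have h1 : ¬ (s + m < s) := by omega
    simp only [hgdef, if_neg h1]
    rw [show s + m + ℓ = k from by omega, hf]
  have hsm : s + m = k - ℓ := by omega
  -- bound the shortened walk
  have hGle : (∏ u ∈ Finset.range s, F u) * (∏ u ∈ Finset.range m, F (s + (ℓ + u))) ≤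
      maxPow A (k - ℓ) (f 0) (f 0) := by
    rw [← hgprod, ← hsm]
    have := walk_le A hnn (s + m) g
    rwa [hg0, hgsm] at this
  -- bound the cycle
  have hCle : (∏ u ∈ Finset.range ℓ, F (s + u)) ≤ tropTr (maxPow A ℓ) := by
    have hw := walk_le A hnn ℓ (fun u => f (s + u))
    have he : (∏ u ∈ Finset.range ℓ, A (f (s + u)) (f (s + u + 1))) ≤
        maxPow A ℓ (f s) (f s) := by
      have h0 : f (s + 0) = f s := by norm_num
      calc (∏ u ∈ Finset.range ℓ, A (f (s + u)) (f (s + u + 1)))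
          = ∏ u ∈ Finset.range ℓ, A (f (s + u)) (f (s + (u + 1))) := rfl
        _ ≤ maxPow A ℓ (f (s + 0)) (f (s + ℓ)) := hw
        _ = maxPow A ℓ (f s) (f s) := by rw [h0, hcyc]
    exact le_trans he (entry_le_tropTr _ (f s))
  have hCnn : 0 ≤ ∏ u ∈ Finset.range ℓ, F (s + u) :=
    Finset.prod_nonneg fun u _ => hnn _ _
  refine ⟨ℓ, by omega, by omega, by omega, ?_⟩
  calc (∏ u ∈ Finset.range k, F u)
      = ((∏ u ∈ Finset.range s, F u) * (∏ u ∈ Finset.range m, F (s + (ℓ + u)))) *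
          (∏ u ∈ Finset.range ℓ, F (s + u)) := hsplit
    _ ≤ maxPow A (k - ℓ) (f 0) (f 0) * tropTr (maxPow A ℓ) :=
        mul_le_mul hGle hCle hCnn (maxPow_nonneg_s8 A hnn _ _ _)


/-- For a positive `n × n` matrix, the `k`-th root of the max-times trace of the
`k`-th max-times power is bounded by the maximum of such roots over `k ∈ {1, …, n}`;
i.e. the supremum over all `k ≥ 1` is attained among `k ∈ {1, …, n}`. -/
theorem trace_root_le_spectral_radius
    (n : ℕ) (hn : 1 ≤ n) (A : Matrix (Fin n) (Fin n) ℝ)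
    (hpos : ∀ i j, 0 < A i j)
    (k : ℕ) (hk : 1 ≤ k) :
    (tropTr (maxPow A k)) ^ ((k : ℝ)⁻¹) ≤
      ⨆ j : Fin n, (tropTr (maxPow A (j.1 + 1))) ^ (((j.1 : ℝ) + 1)⁻¹) := by
  have hnn : ∀ i j, 0 ≤ A i j := fun i j => (hpos i j).le
  haveI hne : Nonempty (Fin n) := ⟨⟨0, by omega⟩⟩
  set M := ⨆ j : Fin n, (tropTr (maxPow A (j.1 + 1))) ^ (((j.1 : ℝ) + 1)⁻¹) with hM
  have htrpos : ∀ j, 1 ≤ j → 0 < tropTr (maxPow A j) := fun j hj =>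
    lt_of_lt_of_le (maxPow_pos A hpos j hj _ _) (entry_le_tropTr _ (Classical.arbitrary _))
  have hMpos : 0 < M := by
    have hle : (tropTr (maxPow A (0 + 1))) ^ ((((0:ℕ) : ℝ) + 1)⁻¹) ≤ M :=
      le_ciSup (Finite.bddAbove_range fun j : Fin n =>
        (tropTr (maxPow A (j.1 + 1))) ^ (((j.1 : ℝ) + 1)⁻¹)) (⟨0, by omega⟩ : Fin n)
    exact lt_of_lt_of_le (Real.rpow_pos_of_pos (htrpos 1 le_rfl) _) hle
  have hkey : ∀ ℓ, 1 ≤ ℓ → ℓ ≤ n → tropTr (maxPow A ℓ) ≤ M ^ ℓ := by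
    intro ℓ h1 h2
    have hle : (tropTr (maxPow A ((ℓ - 1) + 1))) ^ ((((ℓ - 1 : ℕ) : ℝ) + 1)⁻¹) ≤ M :=
      le_ciSup (Finite.bddAbove_range fun j : Fin n =>
        (tropTr (maxPow A (j.1 + 1))) ^ (((j.1 : ℝ) + 1)⁻¹)) (⟨ℓ - 1, by omega⟩ : Fin n)
    have e1 : ℓ - 1 + 1 = ℓ := by omega
    have e2 : ((ℓ - 1 : ℕ) : ℝ) + 1 = (ℓ : ℝ) := by exact_mod_cast congrArg (Nat.cast (R := ℝ)) e1
    rw [e1, e2] at hle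
    have hx := htrpos ℓ h1
    calc tropTr (maxPow A ℓ) = (tropTr (maxPow A ℓ) ^ ((ℓ : ℝ))⁻¹) ^ ℓ :=
        (Real.rpow_inv_natCast_pow hx.le (by omega)).symm
      _ ≤ M ^ ℓ := pow_le_pow_left₀ (Real.rpow_nonneg hx.le _) hle ℓ
  have hmain : ∀ k, 1 ≤ k → tropTr (maxPow A k) ≤ M ^ k := by
    intro k
    induction k using Nat.strong_induction_on with
    | _ k ih =>
      intro hk
      by_cases hkn : k ≤ n
      · exact hkey k hk hkn
      · push_neg at hkn
        refine ciSup_le fun i => ?_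
        obtain ⟨f, hf0, hfk, hfw⟩ := exists_walk A hnn k hk i i
        have hfc : f k = f 0 := by rw [hf0, hfk]
        obtain ⟨ℓ, hℓ1, hℓn, hℓk, hcut⟩ := cut_cycle A hpos k hkn f hfc
        rw [hf0] at hcut
        calc maxPow A k i i = ∏ t ∈ Finset.range k, A (f t) (f (t+1)) := hfw
          _ ≤ maxPow A (k - ℓ) i i * tropTr (maxPow A ℓ) := hcut
          _ ≤ M ^ (k - ℓ) * M ^ ℓ :=
              mul_le_mul (le_trans (entry_le_tropTr _ _) (ih (k - ℓ) (by omega) (by omega)))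
                (hkey ℓ hℓ1 hℓn) (htrpos ℓ hℓ1).le (pow_nonneg hMpos.le _)
          _ = M ^ k := by rw [← pow_add]; congr 1; omega
  have hx := htrpos k hk
  calc (tropTr (maxPow A k)) ^ ((k : ℝ))⁻¹ ≤ (M ^ k) ^ ((k : ℝ))⁻¹ :=
      Real.rpow_le_rpow hx.le (hmain k hk) (by positivity)
    _ = M := Real.pow_rpow_inv_natCast hMpos.le (by omega)
end

section
/- Let n ≥ 1 and let A = (a_ij) be a positive n×n reciprocal matrix. Then (i) for every positive vector x in ℝⁿ, max_{1≤i,j≤n} a_ij x_j / x_i ≥ 1; and (ii) there exists a positive vector x with max_{1≤i,j≤n} a_ij x_j / x_i = 1 if and only if A is consistent. -/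
/-!
The diagonal of a positive reciprocal matrix is `1`, so the term `i = j` already gives
objective `≥ 1`. If the objective equals `1` at `x`, then `a_ij x_j ≤ x_i` and
`a_ji x_i ≤ x_j`; by reciprocity the second reads `x_i ≤ a_ij x_j`, so `a_ij = x_i / x_j`,
which is consistent. Conversely, for a consistent matrix every column `x_j = a_jk` makes
each ratio `a_ij a_jk / a_ik` equal to `1`.
-/

variable {ι : Type*}

noncomputable def logChebyshevObjective (A : Matrix ι ι ℝ) (x : ι → ℝ) : ℝ :=
  ⨆ i, ⨆ j, A i j * x j / x i

lemma le_logChebyshevObjective [Finite ι] (A : Matrix ι ι ℝ) (x : ι → ℝ) (i j : ι) :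
    A i j * x j / x i ≤ logChebyshevObjective A x :=
  (le_ciSup (f := fun j ↦ A i j * x j / x i) (Finite.bddAbove_range _) j).trans
    (le_ciSup (f := fun i ↦ ⨆ j, A i j * x j / x i) (Finite.bddAbove_range _) i)

lemma logChebyshevObjective_le_iff [Finite ι] [Nonempty ι] {A : Matrix ι ι ℝ} {x : ι → ℝ}
    {c : ℝ} :
    logChebyshevObjective A x ≤ c ↔ ∀ i j, A i j * x j / x i ≤ c := by
  simp only [logChebyshevObjective, ciSup_le_iff (Finite.bddAbove_range _)]

lemma one_le_logChebyshevObjective [Finite ι] {A : Matrix ι ι ℝ} {x : ι → ℝ} {i : ι}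
    (hA : A i i = 1) (hx : x i ≠ 0) : 1 ≤ logChebyshevObjective A x := by
  simpa [hA, hx] using le_logChebyshevObjective A x i i

lemma logChebyshevObjective_eq_one_of_consistent [Nonempty ι] {A : Matrix ι ι ℝ}
    (hcons : ∀ i j k, A i j = A i k * A k j) (k : ι) (hk : ∀ i, A i k ≠ 0) :
    logChebyshevObjective A (fun j ↦ A j k) = 1 := by
  simp only [logChebyshevObjective, ← hcons, div_self (hk _), ciSup_const]

lemma eq_div_of_ratios_le_one {a b x y : ℝ} (ha : 0 < a) (hab : a * b = 1)
    (hx : 0 < x) (hy : 0 < y) (h₁ : a * y / x ≤ 1) (h₂ : b * x / y ≤ 1) : a = x / y := by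
  rw [div_le_one hx] at h₁
  rw [div_le_one hy] at h₂
  have h₃ : x ≤ a * y :=
    calc x = a * b * x := by rw [hab, one_mul]
      _ = a * (b * x) := mul_assoc a b x
      _ ≤ a * y := mul_le_mul_of_nonneg_left h₂ ha.le
  rw [eq_div_iff hy.ne']
  exact le_antisymm h₁ h₃

lemma consistent_of_eq_div {A : Matrix ι ι ℝ} {x : ι → ℝ} (hx : ∀ i, x i ≠ 0)
    (hA : ∀ i j, A i j = x i / x j) (i j k : ι) : A i j = A i k * A k j := by
  rw [hA, hA, hA, div_mul_div_cancel₀ (hx k)]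

/-- For a positive reciprocal matrix `A`: (i) the log-Chebyshev objective
`max_{i,j} a i j * x j / x i` is at least `1` for every positive vector `x`;
(ii) the value `1` is attained by some positive vector iff `A` is consistent. -/
theorem logChebyshev_objective_ge_one_and_eq_one_iff_consistent
    (n : ℕ) (hn : 1 ≤ n) (A : Matrix (Fin n) (Fin n) ℝ)
    (hpos : ∀ i j, 0 < A i j)
    (hrec : ∀ i j, A i j * A j i = 1) :
    (∀ x : Fin n → ℝ, (∀ j, 0 < x j) → 1 ≤ ⨆ i, ⨆ j, A i j * x j / x i) ∧
      ((∃ x : Fin n → ℝ, (∀ j, 0 < x j) ∧ (⨆ i, ⨆ j, A i j * x j / x i) = 1) ↔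
        ∀ i j k, A i j = A i k * A k j) := by
  let i₀ : Fin n := ⟨0, hn⟩
  have : Nonempty (Fin n) := ⟨i₀⟩
  have hdiag : ∀ i, A i i = 1 := fun i ↦ by nlinarith [hrec i i, hpos i i]
  refine ⟨fun x hx ↦ one_le_logChebyshevObjective (hdiag i₀) (hx i₀).ne', ?_, ?_⟩
  · rintro ⟨x, hx, hobj⟩
    have hratio := logChebyshevObjective_le_iff.mp hobj.le
    refine consistent_of_eq_div (fun i ↦ (hx i).ne') fun i j ↦ ?_
    exact eq_div_of_ratios_le_one (hpos i j) (hrec i j) (hx i) (hx j) (hratio i j) (hratio j i)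
  · intro hcons
    exact ⟨fun j ↦ A j i₀, fun j ↦ hpos j i₀,
      logChebyshevObjective_eq_one_of_consistent hcons i₀ fun i ↦ (hpos i i₀).ne'⟩
end

section
/- Let n ≥ 1, let B = (b_ij) be a positive n×n matrix, and let u = (u_j) be a positive vector in ℝⁿ. Define x_i = max_{1≤j≤n} b_ij u_j. Then the Hilbert seminorm of x is bounded by the maximal Hilbert seminorm of the columns of B: (max_{1≤i≤n} x_i) / (min_{1≤i≤n} x_i) ≤ max_{1≤k≤n} ( (max_{1≤i≤n} b_ik) / (min_{1≤i≤n} b_ik) ). -/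
/-- The Hilbert seminorm of a max-times product `B ⊗ u` (with `B` positive and `u`
positive) is bounded by the maximal Hilbert seminorm of the columns of `B`. -/
theorem hilbert_seminorm_maxMulVec_le
    (n : ℕ) (hn : 1 ≤ n) (B : Matrix (Fin n) (Fin n) ℝ)
    (hpos : ∀ i j, 0 < B i j)
    (u : Fin n → ℝ) (hu : ∀ j, 0 < u j)
    (x : Fin n → ℝ) (hx : ∀ i, x i = ⨆ j, B i j * u j) :
    (⨆ i, x i) / (⨅ i, x i) ≤ ⨆ k, (⨆ i, B i k) / (⨅ i, B i k) := by
  have hne : Nonempty (Fin n) := ⟨⟨0, hn⟩⟩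
  -- maximizer of x
  obtain ⟨a, ha⟩ := Finite.exists_max x
  obtain ⟨j₀, hj₀⟩ := Finite.exists_max (fun j => B a j * u j)
  have hbddx : BddAbove (Set.range x) := Set.Finite.bddAbove (Set.finite_range x)
  have hsupx : (⨆ i, x i) = B a j₀ * u j₀ := by
    apply le_antisymm
    · apply ciSup_le
      intro i
      refine le_trans (ha i) ?_
      rw [hx a]
      exact ciSup_le hj₀
    · refine le_trans ?_ (le_ciSup hbddx a)
      rw [hx a]
      exact le_ciSup (f := fun j => B a j * u j) (Set.Finite.bddAbove (Set.finite_range _)) j₀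
  -- minimizer of column j₀
  obtain ⟨m, hm⟩ := Finite.exists_min (fun i => B i j₀)
  have hinfB : (⨅ i, B i j₀) = B m j₀ := by
    apply le_antisymm
    · exact ciInf_le (Set.Finite.bddBelow (Set.finite_range _)) m
    · exact le_ciInf hm
  have hinfBpos : 0 < ⨅ i, B i j₀ := hinfB ▸ hpos m j₀
  have hinfx : (⨅ i, B i j₀) * u j₀ ≤ ⨅ i, x i := by
    apply le_ciInf
    intro i
    rw [hx i]
    refine le_trans ?_ (le_ciSup (Set.Finite.bddAbove (Set.finite_range _)) j₀)
    exact mul_le_mul_of_nonneg_right (ciInf_le (Set.Finite.bddBelow (Set.finite_range _)) i)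
      (hu j₀).le
  have hstep1 : (⨆ i, x i) / (⨅ i, x i) ≤ (B a j₀ * u j₀) / ((⨅ i, B i j₀) * u j₀) := by
    rw [hsupx]
    exact div_le_div₀ (mul_pos (hpos a j₀) (hu j₀)).le le_rfl (mul_pos hinfBpos (hu j₀)) hinfx
  have hstep2 : (B a j₀ * u j₀) / ((⨅ i, B i j₀) * u j₀) = B a j₀ / (⨅ i, B i j₀) :=
    mul_div_mul_right _ _ (hu j₀).ne'
  have hstep3 : B a j₀ / (⨅ i, B i j₀) ≤ (⨆ i, B i j₀) / (⨅ i, B i j₀) := by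
    apply (div_le_div_iff_of_pos_right hinfBpos).mpr
    exact le_ciSup (f := fun i => B i j₀) (Set.Finite.bddAbove (Set.finite_range _)) a
  calc (⨆ i, x i) / (⨅ i, x i) ≤ B a j₀ / (⨅ i, B i j₀) := by
        rw [← hstep2]; exact hstep1
    _ ≤ (⨆ i, B i j₀) / (⨅ i, B i j₀) := hstep3
    _ ≤ ⨆ k, (⨆ i, B i k) / (⨅ i, B i k) :=
        le_ciSup (f := fun k => (⨆ i, B i k) / ⨅ i, B i k)
          (Set.Finite.bddAbove (Set.finite_range _)) j₀
end

section
/- Let n ≥ 1 and let B = (b_ij) be a positive n×n matrix with columns b_1, …, b_n. Then the supremum over all positive vectors u in ℝⁿ of the Hilbert seminorm (max_i (B⊗u)_i) / (min_i (B⊗u)_i) of the max-times product B ⊗ u equals max_{1≤i,l,k≤n} b_ik / b_lk = max_{1≤k≤n} (max_i b_ik)·(max_i b_ik^{−1}), and this supremum is attained: there is a positive u such that B ⊗ u is a positive multiple of a column b_k for which (max_i b_ik)·(max_i b_ik^{−1}) is maximal. -/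
section Aux

variable {n : ℕ} [Nonempty (Fin n)]

omit [Nonempty (Fin n)] in
private lemma myBddA (f : Fin n → ℝ) : BddAbove (Set.range f) := Finite.bddAbove_range f

private lemma sup_pos {f : Fin n → ℝ} (hf : ∀ i, 0 < f i) : 0 < ⨆ i, f i :=
  lt_of_lt_of_le (hf (Classical.arbitrary _)) (le_ciSup (myBddA f) _)

private lemma inf_pos {f : Fin n → ℝ} (hf : ∀ i, 0 < f i) : 0 < ⨅ i, f i := by
  obtain ⟨i, hi⟩ := exists_eq_ciInf_of_finite (f := f)
  rw [← hi]; exact hf i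

private lemma iSup_inv_eq {a : Fin n → ℝ} (ha : ∀ i, 0 < a i) :
    (⨆ i, (a i)⁻¹) = (⨅ i, a i)⁻¹ := by
  refine le_antisymm (ciSup_le fun i => ?_) ?_
  · exact inv_anti₀ (inf_pos ha) (ciInf_le (Finite.bddBelow_range a) i)
  · obtain ⟨l, hl⟩ := exists_eq_ciInf_of_finite (f := a)
    rw [← hl]
    exact le_ciSup (f := fun i => (a i)⁻¹) (myBddA _) l

omit [Nonempty (Fin n)] in
private lemma le_iSup3 (F : Fin n → Fin n → Fin n → ℝ) (i l k : Fin n) :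
    F i l k ≤ ⨆ i, ⨆ l, ⨆ k, F i l k :=
  calc F i l k ≤ ⨆ k, F i l k := le_ciSup (myBddA _) k
    _ ≤ ⨆ l, ⨆ k, F i l k := le_ciSup (f := fun l => ⨆ k, F i l k) (myBddA _) l
    _ ≤ _ := le_ciSup (f := fun i => ⨆ l, ⨆ k, F i l k) (myBddA _) i

end Aux

/-- The supremum over positive `u` of the Hilbert seminorm of `B ⊗ u` equals
`max_{i,l,k} b i k / b l k = max_k (max_i b i k) * (max_i (b i k)⁻¹)`, and it is
attained at some positive `u` for which `B ⊗ u` is a positive multiple of a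
column of `B` with maximal Hilbert seminorm. -/
theorem sup_hilbert_seminorm_over_span
    (n : ℕ) (hn : 1 ≤ n) (B : Matrix (Fin n) (Fin n) ℝ)
    (hpos : ∀ i j, 0 < B i j) :
    sSup {h : ℝ | ∃ u : Fin n → ℝ, (∀ j, 0 < u j) ∧
          h = (⨆ i, ⨆ j, B i j * u j) / ⨅ i, ⨆ j, B i j * u j} =
        (⨆ i, ⨆ l, ⨆ k, B i k / B l k) ∧
      (⨆ i, ⨆ l, ⨆ k, B i k / B l k) =
        (⨆ k, (⨆ i, B i k) * ⨆ i, (B i k)⁻¹) ∧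
      ∃ u : Fin n → ℝ, (∀ j, 0 < u j) ∧ ∃ k : Fin n, ∃ c : ℝ, 0 < c ∧
        (∀ i, (⨆ j, B i j * u j) = c * B i k) ∧
        ∀ k' : Fin n,
          (⨆ i, B i k') * (⨆ i, (B i k')⁻¹) ≤ (⨆ i, B i k) * ⨆ i, (B i k)⁻¹ := by
  haveI : Nonempty (Fin n) := ⟨⟨0, hn⟩⟩
  set M : ℝ := ⨆ i, ⨆ l, ⨆ k, B i k / B l k with hM
  set g : Fin n → ℝ := fun k => (⨆ i, B i k) * ⨆ i, (B i k)⁻¹ with hg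
  -- g k rewritten as a quotient sup/inf
  have hgq : ∀ k, g k = (⨆ i, B i k) / ⨅ i, B i k := by
    intro k
    simp only [hg, iSup_inv_eq (fun i => hpos i k), div_eq_mul_inv]
  -- Part 2 : M = ⨆ k, g k
  have h2 : M = ⨆ k, g k := by
    refine le_antisymm (ciSup_le fun i => ciSup_le fun l => ciSup_le fun k => ?_) ?_
    · have h1 : B i k / B l k ≤ g k := by
        rw [div_eq_mul_inv, hg]
        exact mul_le_mul (le_ciSup (f := fun i => B i k) (myBddA _) i)
          (le_ciSup (f := fun i => (B i k)⁻¹) (myBddA _) l)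
          (le_of_lt (inv_pos.2 (hpos l k))) (le_of_lt (sup_pos fun i => hpos i k))
      exact h1.trans (le_ciSup (myBddA g) k)
    · refine ciSup_le fun k => ?_
      obtain ⟨i0, hi0⟩ := exists_eq_ciSup_of_finite (f := fun i => B i k)
      obtain ⟨l0, hl0⟩ := exists_eq_ciInf_of_finite (f := fun i => B i k)
      have : g k = B i0 k / B l0 k := by rw [hgq k, ← hi0, ← hl0]
      rw [this]
      exact le_iSup3 (fun i l k => B i k / B l k) i0 l0 k
  -- choose k maximizing g
  obtain ⟨k, hk⟩ := Finite.exists_max g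
  have hNk : (⨆ k, g k) = g k :=
    le_antisymm (ciSup_le hk) (le_ciSup (myBddA g) k)
  -- construct u
  set m : ℝ := ⨅ i, B i k with hm
  have hmpos : 0 < m := inf_pos fun i => hpos i k
  set Mx : ℝ := ⨆ i, ⨆ j, B i j with hMx
  have hMxpos : 0 < Mx := sup_pos fun i => sup_pos fun j => hpos i j
  have hBMx : ∀ i j, B i j ≤ Mx := fun i j =>
    le_trans (le_ciSup (myBddA _) j) (le_ciSup (f := fun i => ⨆ j, B i j) (myBddA _) i)
  set ε : ℝ := m / Mx with hε
  have hεpos : 0 < ε := div_pos hmpos hMxpos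
  set u : Fin n → ℝ := fun j => if j = k then 1 else ε with hu
  have hupos : ∀ j, 0 < u j := by
    intro j; rw [hu]; dsimp only; split
    · exact one_pos
    · exact hεpos
  -- key : ⨆ j, B i j * u j = B i k
  have hfi : ∀ i, (⨆ j, B i j * u j) = B i k := by
    intro i
    refine le_antisymm (ciSup_le fun j => ?_) ?_
    · rw [hu]; dsimp only; split
      · rename_i h; rw [h, mul_one]
      · have h1 : B i j * ε ≤ Mx * ε := by
          exact mul_le_mul_of_nonneg_right (hBMx i j) (le_of_lt hεpos)
        have h2 : Mx * ε = m := by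
          rw [hε]; field_simp
        have h3 : m ≤ B i k := ciInf_le (Finite.bddBelow_range _) i
        linarith
    · have : B i k * u k ≤ ⨆ j, B i j * u j :=
        le_ciSup (f := fun j => B i j * u j) (myBddA _) k
      simpa [hu] using this
  refine ⟨?_, h2, u, hupos, k, 1, one_pos, fun i => by rw [hfi i, one_mul], hk⟩
  -- Part 1 : sSup = M
  set S : Set ℝ := {h : ℝ | ∃ u : Fin n → ℝ, (∀ j, 0 < u j) ∧
          h = (⨆ i, ⨆ j, B i j * u j) / ⨅ i, ⨆ j, B i j * u j} with hS
  -- M ∈ S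
  have hMS : M ∈ S := by
    refine ⟨u, hupos, ?_⟩
    have e1 : (⨆ i, ⨆ j, B i j * u j) = ⨆ i, B i k := by
      simp only [hfi]
    have e2 : (⨅ i, ⨆ j, B i j * u j) = ⨅ i, B i k := by
      simp only [hfi]
    rw [e1, e2, ← hgq k, ← hNk, ← h2]
  -- upper bound
  have hub : ∀ h ∈ S, h ≤ M := by
    rintro h ⟨v, hv, rfl⟩
    set f : Fin n → ℝ := fun i => ⨆ j, B i j * v j with hf
    have hfpos : ∀ i, 0 < f i := by
      intro i
      exact sup_pos fun j => mul_pos (hpos i j) (hv j)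
    obtain ⟨i0, hi0⟩ := exists_eq_ciSup_of_finite (f := f)
    obtain ⟨l0, hl0⟩ := exists_eq_ciInf_of_finite (f := f)
    obtain ⟨j0, hj0⟩ := exists_eq_ciSup_of_finite (f := fun j => B i0 j * v j)
    have hl0ge : B l0 j0 * v j0 ≤ f l0 :=
      le_ciSup (f := fun j => B l0 j * v j) (myBddA _) j0
    have hden : 0 < B l0 j0 * v j0 := mul_pos (hpos l0 j0) (hv j0)
    have step1 : (⨆ i, f i) / (⨅ i, f i) ≤ (B i0 j0 * v j0) / (B l0 j0 * v j0) := by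
      rw [← hi0, ← hl0, hj0]
      exact div_le_div_of_nonneg_left (le_of_lt (hfpos i0)) hden hl0ge
    have step2 : (B i0 j0 * v j0) / (B l0 j0 * v j0) = B i0 j0 / B l0 j0 :=
      mul_div_mul_right _ _ (ne_of_gt (hv j0))
    calc (⨆ i, f i) / (⨅ i, f i) ≤ B i0 j0 / B l0 j0 := by rw [← step2]; exact step1
      _ ≤ M := le_iSup3 (fun i l k => B i k / B l k) i0 l0 j0
  exact le_antisymm (csSup_le ⟨M, hMS⟩ hub) (le_csSup ⟨M, hub⟩ hMS)
end

section
/- Let n ≥ 1 and let B = (b_ij) be a positive n×n matrix with unit diagonal (b_ii = 1) satisfying b_ij · b_jk ≤ b_ik for all i, j, k. Define the vector x* by x*_j = (max_{1≤i≤n} b_ij)^{−1}. Then x* is a max-times fixed point of B: max_{1≤k≤n} b_jk x*_k = x*_j for every j; in particular, x* lies in the max-times column span { x : x_i = max_j b_ij u_j for some positive u } of B, and max_j x*_j = 1. -/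
/-- For a positive Kleene star matrix `B`, the vector `x*` with
`x*_j = (max_i b i j)⁻¹` is a max-times fixed point of `B`; in particular it lies
in the max-times column span of `B` and satisfies `max_j x*_j = 1`. -/
theorem conjugate_column_maxima_is_fixed_point
    (n : ℕ) (hn : 1 ≤ n) (B : Matrix (Fin n) (Fin n) ℝ)
    (hpos : ∀ i j, 0 < B i j)
    (hdiag : ∀ i, B i i = 1)
    (htrans : ∀ i j k, B i j * B j k ≤ B i k) :
    (∀ j, (⨆ k, B j k * (⨆ i, B i k)⁻¹) = (⨆ i, B i j)⁻¹) ∧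
      (∃ u : Fin n → ℝ, (∀ j, 0 < u j) ∧
        ∀ i, (⨆ l, B l i)⁻¹ = ⨆ j, B i j * u j) ∧
      (⨆ j, (⨆ i, B i j)⁻¹) = 1 := by
  haveI : Nonempty (Fin n) := Fin.pos_iff_nonempty.mp hn
  set M : Fin n → ℝ := fun j => ⨆ i, B i j with hM
  have hbdd : ∀ j, BddAbove (Set.range fun i => B i j) := fun j =>
    (Set.finite_range _).bddAbove
  have hBle : ∀ i j, B i j ≤ M j := fun i j => le_ciSup (hbdd j) i
  have hM1 : ∀ j, 1 ≤ M j := fun j => by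
    have := hBle j j; rwa [hdiag j] at this
  have hMpos : ∀ j, 0 < M j := fun j => lt_of_lt_of_le one_pos (hM1 j)
  -- key inequality : B j k * (M k)⁻¹ ≤ (M j)⁻¹
  have key : ∀ j k, B j k * (M k)⁻¹ ≤ (M j)⁻¹ := by
    intro j k
    have h1 : M j * B j k ≤ M k := by
      have h2 : M j ≤ M k / B j k := by
        apply ciSup_le
        intro i
        rw [le_div_iff₀ (hpos j k)]
        exact le_trans (htrans i j k) (hBle i k)
      calc M j * B j k ≤ (M k / B j k) * B j k :=
            mul_le_mul_of_nonneg_right h2 (le_of_lt (hpos j k))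
        _ = M k := div_mul_cancel₀ _ (ne_of_gt (hpos j k))
    rw [mul_inv_le_iff₀ (hMpos k), inv_mul_eq_div, le_div_iff₀ (hMpos j)]
    linarith [h1]
  -- fixed point property
  have fix : ∀ j, (⨆ k, B j k * (M k)⁻¹) = (M j)⁻¹ := by
    intro j
    apply le_antisymm
    · exact ciSup_le (key j)
    · have : B j j * (M j)⁻¹ ≤ ⨆ k, B j k * (M k)⁻¹ :=
        le_ciSup (f := fun k => B j k * (M k)⁻¹) ((Set.finite_range _).bddAbove) j
      rwa [hdiag j, one_mul] at this
  refine ⟨fix, ⟨fun j => (M j)⁻¹, fun j => inv_pos.mpr (hMpos j),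
      fun i => (fix i).symm⟩, ?_⟩
  -- there is a column whose maximum is 1
  have hex : ∃ j, M j = 1 := by
    by_contra hcon
    push_neg at hcon
    have hgt : ∀ j, 1 < M j := fun j => lt_of_le_of_ne (hM1 j) (Ne.symm (hcon j))
    have hf : ∀ j, ∃ i, 1 < B i j := by
      intro j
      obtain ⟨i, hi⟩ := exists_lt_of_lt_ciSup (hgt j)
      exact ⟨i, hi⟩
    choose f hf using hf
    -- iterates of f give entries > 1
    have claim : ∀ (j : Fin n) (m : ℕ), 1 < B (f^[m+1] j) j := by
      intro j m
      induction m with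
      | zero => simpa using hf j
      | succ m ih =>
        have step : 1 < B (f (f^[m+1] j)) (f^[m+1] j) := hf _
        have := htrans (f (f^[m+1] j)) (f^[m+1] j) j
        have h2 : 1 < B (f (f^[m+1] j)) (f^[m+1] j) * B (f^[m+1] j) j :=
          one_lt_mul_of_lt_of_le step (le_of_lt ih)
        rw [Function.iterate_succ_apply']
        exact lt_of_lt_of_le h2 this
    -- pigeonhole on iterates
    obtain ⟨j0⟩ := (inferInstance : Nonempty (Fin n))
    obtain ⟨s, t, hst, heq⟩ :=
      Finite.exists_ne_map_eq_of_infinite (fun m : ℕ => f^[m] j0)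
    rcases Ne.lt_or_gt hst with h | h
    · set d := t - s - 1 with hd
      have ht : t = (d + 1) + s := by omega
      have : f^[d+1] (f^[s] j0) = f^[s] j0 := by
        rw [← Function.iterate_add_apply, ← ht, ← heq]
      have hc := claim (f^[s] j0) d
      rw [this, hdiag] at hc
      linarith
    · set d := s - t - 1 with hd
      have ht : s = (d + 1) + t := by
        omega
      have hfix : f^[d+1] (f^[t] j0) = f^[t] j0 := by
        rw [← Function.iterate_add_apply, ← ht, heq]
      have := claim (f^[t] j0) d
      rw [hfix] at this
      rw [hdiag] at this
      linarith
  obtain ⟨j1, hj1⟩ := hex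
  apply le_antisymm
  · exact ciSup_le fun j => inv_le_one_of_one_le₀ (hM1 j)
  · have : (M j1)⁻¹ ≤ ⨆ j, (M j)⁻¹ :=
      le_ciSup (f := fun j => (M j)⁻¹) ((Set.finite_range _).bddAbove) j1
    rwa [hj1, inv_one] at this
end
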